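/- arXiv:1804.03646 — 9 statements merged into one kernel-verified Lean document; each statement's English description precedes it below -/
import Mathlib

section
/- Let F be an intersecting family of subsets of a finite set, let C be the downset (simplicial complex) generated by F, and suppose F ⊆ st_C(a) ∪ st_C(b) for two vertices a, b. Then |F| ≤ max(|st_C(a)|, |st_C(b)|). -/
open Finset FinsetFamily

namespace KMaux

variable {α : Type*} [DecidableEq α]

/-- The downset generated by a family. -/
def dsF (X : Finset (Finset α)) : Finset (Finset α) := X.biUnion Finset.powerset

lemma mem_dsF {X : Finset (Finset α)} {S : Finset α} :
    S ∈ dsF X ↔ ∃ T ∈ X, S ⊆ T := by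
  simp [dsF]

lemma subset_dsF (X : Finset (Finset α)) : X ⊆ dsF X := fun S hS =>
  mem_dsF.2 ⟨S, hS, subset_rfl⟩

lemma dsF_mono {X Y : Finset (Finset α)} (h : X ⊆ Y) : dsF X ⊆ dsF Y := by
  intro S hS
  obtain ⟨T, hT, hST⟩ := mem_dsF.1 hS
  exact mem_dsF.2 ⟨T, h hT, hST⟩

/-- Key lemma: a pair of cross-intersecting families is bounded by the larger downset. -/
lemma lemL (A B : Finset (Finset α)) (h : ∀ S ∈ A, ∀ T ∈ B, (S ∩ T).Nonempty) :
    A.card + B.card ≤ max (dsF A).card (dsF B).card := by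
  rcases A.eq_empty_or_nonempty with rfl | hA
  · simpa using le_max_of_le_right (card_le_card (subset_dsF B))
  rcases B.eq_empty_or_nonempty with rfl | hB
  · simpa using le_max_of_le_left (card_le_card (subset_dsF A))
  have key : ∀ X Y : Finset (Finset α), (∀ S ∈ X, ∀ T ∈ Y, (S ∩ T).Nonempty) →
      X.card + (X \\ Y).card ≤ (dsF X).card := by
    intro X Y hXY
    have hsub : X ∪ (X \\ Y) ⊆ dsF X := by
      intro U hU
      rcases mem_union.1 hU with hU | hU
      · exact subset_dsF X hU
      · obtain ⟨S, hS, T, hT, rfl⟩ := mem_diffs.1 hU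
        exact mem_dsF.2 ⟨S, hS, sdiff_subset⟩
    have hdis : Disjoint X (X \\ Y) := by
      rw [disjoint_left]
      intro U hU hU'
      obtain ⟨S, hS, T, hT, rfl⟩ := mem_diffs.1 hU'
      have h1 := hXY _ hU T hT
      rw [sdiff_inter_self] at h1
      exact absurd h1 (by simp)
    calc X.card + (X \\ Y).card = (X ∪ (X \\ Y)).card := (card_union_of_disjoint hdis).symm
      _ ≤ (dsF X).card := card_le_card hsub
  have h1 := key A B h
  have h2 := key B A (fun T hT S hS => by rw [inter_comm]; exact h S hS T hT)
  have hprod := Finset.le_card_diffs_mul_card_diffs A B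
  have hx : 1 ≤ (A \\ B).card := card_pos.2 (hA.diffs hB)
  have hy : 1 ≤ (B \\ A).card := card_pos.2 (hB.diffs hA)
  rcases le_or_gt B.card (A \\ B).card with hc | hc
  · exact le_max_of_le_left (le_trans (by omega) h1)
  · have hyA : A.card ≤ (B \\ A).card := by
      by_contra h'
      push_neg at h'
      have h2' : (A \\ B).card * (B \\ A).card < B.card * A.card :=
        mul_lt_mul'' hc h' (Nat.zero_le _) (Nat.zero_le _)
      rw [mul_comm] at hprod
      exact absurd (hprod.trans_lt h2') (lt_irrefl _)
    exact le_max_of_le_right (le_trans (by omega) h2)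

/-- The family of `a`-but-not-`b` members, with `a` erased. -/
def Bfam (F : Finset (Finset α)) (a b : α) : Finset (Finset α) :=
  (F.filter fun S => a ∈ S ∧ b ∉ S).image (·.erase a)

lemma aux (F : Finset (Finset α)) (a b : α) (hne : a ≠ b)
    (hF : ∀ A ∈ F, ∀ B ∈ F, (A ∩ B).Nonempty)
    (hab : ∀ B ∈ F, a ∈ B ∨ b ∈ B)
    (hle : (dsF (Bfam F b a)).card ≤ (dsF (Bfam F a b)).card) :
    F.card ≤ ((dsF F).filter fun S => a ∈ S).card := by
  classical
  set Fa := F.filter (fun S => a ∈ S ∧ b ∉ S) with hFa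
  set Fb := F.filter (fun S => b ∈ S ∧ a ∉ S) with hFb
  set Fab := F.filter (fun S => a ∈ S ∧ b ∈ S) with hFab
  set A := Bfam F a b with hA
  set B := Bfam F b a with hB
  set G := Fab.image (fun S => (S.erase a).erase b) with hG
  -- partition of F
  have hpart : Fa ∪ Fb ∪ Fab = F := by
    ext S
    simp only [hFa, hFb, hFab, mem_union, mem_filter]
    constructor
    · tauto
    · intro hS
      have := hab S hS
      by_cases ha : a ∈ S <;> by_cases hb : b ∈ S <;> tauto
  have hd1 : Disjoint Fa Fb := by
    rw [disjoint_left]; intro S h1 h2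
    simp only [hFa, hFb, mem_filter] at h1 h2; tauto
  have hd2 : Disjoint (Fa ∪ Fb) Fab := by
    rw [disjoint_left]; intro S h1 h2
    simp only [hFa, hFb, hFab, mem_union, mem_filter] at h1 h2; tauto
  have hcard : F.card = Fa.card + Fb.card + Fab.card := by
    rw [← hpart, card_union_of_disjoint hd2, card_union_of_disjoint hd1]
  -- cardinalities of the erased families
  have hAcard : A.card = Fa.card := by
    apply card_image_of_injOn
    intro S hS T hT hST
    simp only [hFa, mem_coe, mem_filter] at hS hT
    have hST' : S.erase a = T.erase a := hST
    rw [← insert_erase hS.2.1, hST', insert_erase hT.2.1]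
  have hBcard : B.card = Fb.card := by
    apply card_image_of_injOn
    intro S hS T hT hST
    simp only [hFb, mem_coe, mem_filter] at hS hT
    have hST' : S.erase b = T.erase b := hST
    rw [← insert_erase hS.2.1, hST', insert_erase hT.2.1]
  have hrestore : ∀ S : Finset α, a ∈ S → b ∈ S →
      insert a (insert b ((S.erase a).erase b)) = S := by
    intro S ha hb
    rw [insert_erase (mem_erase.2 ⟨Ne.symm hne, hb⟩), insert_erase ha]
  have hGcard : G.card = Fab.card := by
    apply card_image_of_injOn
    intro S hS T hT hST
    simp only [hFab, mem_coe, mem_filter] at hS hT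
    have hST' : (S.erase a).erase b = (T.erase a).erase b := hST
    rw [← hrestore S hS.2.1 hS.2.2, hST', hrestore T hT.2.1 hT.2.2]
  -- cross-intersecting
  have hcross : ∀ S' ∈ A, ∀ T' ∈ B, (S' ∩ T').Nonempty := by
    intro S' hS' T' hT'
    obtain ⟨S, hS, rfl⟩ := mem_image.1 hS'
    obtain ⟨T, hT, rfl⟩ := mem_image.1 hT'
    simp only [hFa, hFb, mem_filter] at hS hT
    obtain ⟨x, hx⟩ := hF S hS.1 T hT.1
    rw [mem_inter] at hx
    exact ⟨x, mem_inter.2 ⟨mem_erase.2 ⟨fun h => hT.2.2 (h ▸ hx.2), hx.1⟩,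
      mem_erase.2 ⟨fun h => hS.2.2 (h ▸ hx.1), hx.2⟩⟩⟩
  -- members of A ∪ G avoid a and b and sit inside a member of F containing a
  have hAG : ∀ Y ∈ A ∪ G, a ∉ Y ∧ b ∉ Y ∧ ∃ S ∈ F, a ∈ S ∧ Y ⊆ S := by
    intro Y hY
    rcases mem_union.1 hY with hY | hY
    · obtain ⟨S, hS, rfl⟩ := mem_image.1 hY
      simp only [hFa, mem_filter] at hS
      exact ⟨notMem_erase _ _, fun h => hS.2.2 (mem_of_mem_erase h),
        S, hS.1, hS.2.1, erase_subset _ _⟩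
    · obtain ⟨S, hS, rfl⟩ := mem_image.1 hY
      simp only [hFab, mem_filter] at hS
      refine ⟨fun h => notMem_erase a _ (mem_of_mem_erase h), notMem_erase _ _,
        S, hS.1, hS.2.1, (erase_subset _ _).trans (erase_subset _ _)⟩
  have hGmem : ∀ Y ∈ G, a ∉ Y ∧ b ∉ Y ∧ ∃ S ∈ F, a ∈ S ∧ b ∈ S ∧ Y ⊆ S := by
    intro Y hY
    obtain ⟨S, hS, rfl⟩ := mem_image.1 hY
    simp only [hFab, mem_filter] at hS
    exact ⟨fun h => notMem_erase a _ (mem_of_mem_erase h), notMem_erase _ _,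
      S, hS.1, hS.2.1, hS.2.2, (erase_subset _ _).trans (erase_subset _ _)⟩
  set st := (dsF F).filter (fun S => a ∈ S) with hst
  -- first injection : X ↦ insert a X
  set J1 := (dsF (A ∪ G)).image (insert a) with hJ1
  set J2 := (dsF G).image (fun X => insert a (insert b X)) with hJ2
  have hXprop : ∀ X ∈ dsF (A ∪ G), a ∉ X ∧ b ∉ X ∧ insert a X ∈ st := by
    intro X hX
    obtain ⟨Y, hY, hXY⟩ := mem_dsF.1 hX
    obtain ⟨haY, hbY, S, hSF, haS, hYS⟩ := hAG Y hY
    refine ⟨fun h => haY (hXY h), fun h => hbY (hXY h), ?_⟩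
    rw [hst, mem_filter]
    exact ⟨mem_dsF.2 ⟨S, hSF, insert_subset haS (hXY.trans hYS)⟩, mem_insert_self _ _⟩
  have hXprop2 : ∀ X ∈ dsF G, a ∉ X ∧ b ∉ X ∧ insert a (insert b X) ∈ st := by
    intro X hX
    obtain ⟨Y, hY, hXY⟩ := mem_dsF.1 hX
    obtain ⟨haY, hbY, S, hSF, haS, hbS, hYS⟩ := hGmem Y hY
    refine ⟨fun h => haY (hXY h), fun h => hbY (hXY h), ?_⟩
    rw [hst, mem_filter]
    exact ⟨mem_dsF.2 ⟨S, hSF, insert_subset haS (insert_subset hbS (hXY.trans hYS))⟩,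
      mem_insert_self _ _⟩
  have hJ1card : J1.card = (dsF (A ∪ G)).card := by
    apply card_image_of_injOn
    intro X hX X' hX' hXX'
    have h1 := (hXprop X hX).1
    have h2 := (hXprop X' hX').1
    rw [← erase_insert h1, hXX', erase_insert h2]
  have hJ2card : J2.card = (dsF G).card := by
    apply card_image_of_injOn
    intro X hX X' hX' hXX'
    obtain ⟨ha1, hb1, -⟩ := hXprop2 X hX
    obtain ⟨ha2, hb2, -⟩ := hXprop2 X' hX'
    have e1 : a ∉ insert b X := by simp [hne, ha1]
    have e2 : a ∉ insert b X' := by simp [hne, ha2]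
    have hXX'' : insert a (insert b X) = insert a (insert b X') := hXX'
    have : insert b X = insert b X' := by
      rw [← erase_insert e1, hXX'', erase_insert e2]
    rw [← erase_insert hb1, this, erase_insert hb2]
  have hJsub : J1 ∪ J2 ⊆ st := by
    intro U hU
    rcases mem_union.1 hU with hU | hU
    · obtain ⟨X, hX, rfl⟩ := mem_image.1 hU
      exact (hXprop X hX).2.2
    · obtain ⟨X, hX, rfl⟩ := mem_image.1 hU
      exact (hXprop2 X hX).2.2
  have hJdis : Disjoint J1 J2 := by
    rw [disjoint_left]
    intro U hU hU'
    obtain ⟨X, hX, rfl⟩ := mem_image.1 hU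
    obtain ⟨X', hX', hEq⟩ := mem_image.1 hU'
    have hb1 : b ∉ insert a X := by
      simp [Ne.symm hne, (hXprop X hX).2.1]
    have : b ∈ insert a X := by
      rw [← hEq]; exact mem_insert_of_mem (mem_insert_self _ _)
    exact hb1 this
  have hstar : (dsF (A ∪ G)).card + (dsF G).card ≤ st.card := by
    rw [← hJ1card, ← hJ2card, ← card_union_of_disjoint hJdis]
    exact card_le_card hJsub
  -- assemble
  have hL := lemL A B hcross
  rw [max_eq_left hle] at hL
  have hG1 : G.card ≤ (dsF G).card := card_le_card (subset_dsF G)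
  have hA1 : (dsF A).card ≤ (dsF (A ∪ G)).card := card_le_card (dsF_mono subset_union_left)
  omega

end KMaux

/-- Kleitman–Magnanti: an intersecting family contained in the union of two stars of the
downset it generates is no larger than the larger star. -/
theorem stmt_1 {α : Type*} [DecidableEq α] (F : Finset (Finset α)) (a b : α)
    (hF : ∀ A ∈ F, ∀ B ∈ F, (A ∩ B).Nonempty)
    (hab : ∀ B ∈ F, a ∈ B ∨ b ∈ B) :
    let C : Finset (Finset α) := F.biUnion Finset.powerset
    F.card ≤ max ((C.filter (fun B => a ∈ B)).card) ((C.filter (fun B => b ∈ B)).card) := by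
  intro C
  by_cases hne : a = b
  · subst hne
    refine le_max_of_le_left (Finset.card_le_card ?_)
    intro S hS
    rw [Finset.mem_filter]
    exact ⟨KMaux.mem_dsF.2 ⟨S, hS, subset_rfl⟩, (hab S hS).elim id id⟩
  · rcases le_total ((KMaux.dsF (KMaux.Bfam F b a)).card) ((KMaux.dsF (KMaux.Bfam F a b)).card)
      with h | h
    · exact le_max_of_le_left (KMaux.aux F a b hne hF hab h)
    · exact le_max_of_le_right (KMaux.aux F b a (Ne.symm hne) hF
        (fun B hB => (hab B hB).symm) h)
end

section
/- Let F be an intersecting family of subsets of a finite set contained in C = downset generated by F, with F ⊆ st_C(a) ∪ st_C(b), and suppose neither st_C(a) nor st_C(b) contains F. Then there exists an intersecting family F' ⊆ C with F' ⊆ st_C(a) ∪ st_C(b) such that either |F'| > |F|, or |F'| = |F| and the sum of the sizes of the members of F' is strictly smaller than that of F. -/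
/-!
Let `𝒜` (resp. `ℬ`) be the link of `a` (resp. `b`) in the members of `F` avoiding `b` (resp. `a`),
and `𝒟 ⊇ 𝒜`, `ℰ ⊇ ℬ` the corresponding links in the downset `C`. Then `𝒟` and `ℰ` are lower
sets on a common ground set `s`, and `𝒜`, `ℬ` are cross-intersecting. If `𝒰` is the upper closure
of `𝒜` in `s` and `𝒱` the family of its transversals, then `ℬ ⊆ 𝒱` and `|𝒰| + |𝒱| = 2^|s|`, so the
Harris-Kleitman inequality gives `(|𝒜| + |ℬ|) 2^|s| ≤ |𝒟| |𝒰| + |ℰ| |𝒱| ≤ max(|𝒟|, |ℰ|) 2^|s|`: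
the star of `a` or of `b` in `C` is at least as large as `F`. If neither is larger, every
inequality above is tight, and a weighted form of the equality case of Harris-Kleitman shows that
one of the two stars has smaller total size.
-/

open Finset

section

variable {α : Type*}

def Finset.totalCard (𝒜 : Finset (Finset α)) : ℕ := ∑ t ∈ 𝒜, #t

variable [DecidableEq α] {𝒜 ℬ 𝒞 𝒟 ℰ 𝒰 𝒱 : Finset (Finset α)} {s : Finset α} {a b : α}

lemma Finset.card_memberSubfamily (a : α) (𝒜 : Finset (Finset α)) :
    #(𝒜.memberSubfamily a) = #{t ∈ 𝒜 | a ∈ t} :=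
  card_image_of_injOn <| (erase_injOn' a).mono fun _ ht => (mem_filter.1 ht).2

lemma Finset.totalCard_memberSubfamily_add_card (a : α) (𝒜 : Finset (Finset α)) :
    totalCard (𝒜.memberSubfamily a) + #(𝒜.memberSubfamily a) = totalCard {t ∈ 𝒜 | a ∈ t} := by
  rw [card_eq_sum_ones, totalCard, totalCard, ← sum_add_distrib, memberSubfamily, sum_image]
  · exact sum_congr rfl fun t ht => card_erase_add_one (mem_filter.1 ht).2
  · exact (erase_injOn' a).mono fun _ ht => (mem_filter.1 ht).2

lemma Finset.totalCard_eq_memberSubfamily_add_nonMemberSubfamily (a : α)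
    (𝒜 : Finset (Finset α)) :
    totalCard 𝒜 = totalCard (𝒜.memberSubfamily a) + #(𝒜.memberSubfamily a)
      + totalCard (𝒜.nonMemberSubfamily a) := by
  rw [totalCard_memberSubfamily_add_card, nonMemberSubfamily, totalCard, totalCard, totalCard,
    sum_filter_add_sum_filter_not]

lemma Finset.subset_of_mem_nonMemberSubfamily (h : ∀ t ∈ 𝒜, t ⊆ insert a s) :
    ∀ t ∈ 𝒜.nonMemberSubfamily a, t ⊆ s := fun t ht => by
  rw [mem_nonMemberSubfamily] at ht
  exact (subset_insert_iff_of_notMem ht.2).1 (h t ht.1)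

lemma Finset.subset_of_mem_memberSubfamily (h : ∀ t ∈ 𝒜, t ⊆ insert a s) :
    ∀ t ∈ 𝒜.memberSubfamily a, t ⊆ s := fun t ht => by
  rw [mem_memberSubfamily] at ht
  exact (subset_insert_iff_of_notMem ht.2).1 ((subset_insert a t).trans (h _ ht.1))

def Finset.IsUpperSetIn (s : Finset α) (𝒜 : Finset (Finset α)) : Prop :=
  ∀ ⦃t u⦄, t ∈ 𝒜 → t ⊆ u → u ⊆ s → u ∈ 𝒜

lemma Finset.IsUpperSetIn.isLowerSet_powerset_sdiff (h : IsUpperSetIn s 𝒜) :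
    IsLowerSet (↑(s.powerset \ 𝒜) : Set (Finset α)) := by
  intro t u hut ht
  simp only [coe_sdiff, Set.mem_sdiff, mem_coe, mem_powerset] at ht ⊢
  exact ⟨hut.trans ht.1, fun hu => ht.2 (h hu hut ht.1)⟩

lemma Finset.IsUpperSetIn.nonMemberSubfamily (h : IsUpperSetIn (insert a s) 𝒜) (ha : a ∉ s) :
    IsUpperSetIn s (𝒜.nonMemberSubfamily a) := by
  intro t u ht htu hus
  rw [mem_nonMemberSubfamily] at ht ⊢
  exact ⟨h ht.1 htu (hus.trans (subset_insert a s)), fun hu => ha (hus hu)⟩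

lemma Finset.IsUpperSetIn.memberSubfamily (h : IsUpperSetIn (insert a s) 𝒜) (ha : a ∉ s) :
    IsUpperSetIn s (𝒜.memberSubfamily a) := by
  intro t u ht htu hus
  rw [mem_memberSubfamily] at ht ⊢
  exact ⟨h ht.1 (insert_subset_insert a htu) (insert_subset_insert a hus), fun hu => ha (hus hu)⟩

lemma Finset.IsUpperSetIn.nonMemberSubfamily_subset_memberSubfamily
    (h : IsUpperSetIn (insert a s) 𝒜) (h𝒜s : ∀ t ∈ 𝒜, t ⊆ insert a s) :
    𝒜.nonMemberSubfamily a ⊆ 𝒜.memberSubfamily a := by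
  intro t ht
  rw [mem_nonMemberSubfamily] at ht
  rw [mem_memberSubfamily]
  exact ⟨h ht.1 (subset_insert a t) (insert_subset (mem_insert_self a s) (h𝒜s t ht.1)), ht.2⟩

/-- **Harris-Kleitman inequality**, from its form for two lower sets by complementing `ℬ`. -/
theorem IsLowerSet.card_inter_le_of_isUpperSetIn (h𝒜 : IsLowerSet (𝒜 : Set (Finset α)))
    (hℬ : IsUpperSetIn s ℬ) (h𝒜s : ∀ t ∈ 𝒜, t ⊆ s) (hℬs : ∀ t ∈ ℬ, t ⊆ s) :
    2 ^ #s * #(𝒜 ∩ ℬ) ≤ #𝒜 * #ℬ := by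
  have hℬp : ℬ ⊆ s.powerset := fun t ht => mem_powerset.2 (hℬs t ht)
  have hHK := h𝒜.le_card_inter_finset' hℬ.isLowerSet_powerset_sdiff h𝒜s
    (fun t ht => mem_powerset.1 (mem_sdiff.1 ht).1)
  have hinter : 𝒜 ∩ (s.powerset \ ℬ) = 𝒜 \ (𝒜 ∩ ℬ) := by
    ext t
    have := h𝒜s t
    simp only [mem_inter, mem_sdiff, mem_powerset]
    tauto
  rw [hinter, card_sdiff_of_subset inter_subset_left, card_sdiff_of_subset hℬp, card_powerset,
    Nat.mul_sub, Nat.mul_sub] at hHK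
  have h₁ : 2 ^ #s * #(𝒜 ∩ ℬ) ≤ 2 ^ #s * #𝒜 :=
    Nat.mul_le_mul_left _ (card_le_card inter_subset_left)
  have h₂ : #𝒜 * #ℬ ≤ #𝒜 * 2 ^ #s := Nat.mul_le_mul_left _ (by simpa using card_le_card hℬp)
  rw [mul_comm (#𝒜) (2 ^ #s)] at hHK h₂
  omega

/-- Over `ℤ`, `(d₁ + d₀) (u₁ + u₀) = 2 (d₀ u₀ + d₁ u₁) - (d₀ - d₁) (u₁ - u₀)`. -/
lemma Nat.eq_and_eq_of_two_mul_add_eq {N i₀ i₁ d₀ d₁ u₀ u₁ : ℕ} (hd : d₁ ≤ d₀) (hu : u₀ ≤ u₁)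
    (h₀ : N * i₀ ≤ d₀ * u₀) (h₁ : N * i₁ ≤ d₁ * u₁)
    (h : 2 * N * (i₁ + i₀) = (d₁ + d₀) * (u₁ + u₀)) :
    N * i₀ = d₀ * u₀ ∧ N * i₁ = d₁ * u₁ ∧ (d₁ = d₀ ∨ u₀ = u₁) := by
  obtain ⟨x, rfl⟩ := Nat.exists_eq_add_of_le hd
  obtain ⟨y, rfl⟩ := Nat.exists_eq_add_of_le hu
  have hxy : x * y = 0 := by nlinarith
  refine ⟨by nlinarith, by nlinarith, ?_⟩
  rcases Nat.mul_eq_zero.1 hxy with rfl | rfl <;> simp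

lemma IsLowerSet.card_inter_eq_of_card_inter_eq_insert (h𝒜 : IsLowerSet (𝒜 : Set (Finset α)))
    (hℬ : IsUpperSetIn (insert a s) ℬ) (ha : a ∉ s) (h𝒜s : ∀ t ∈ 𝒜, t ⊆ insert a s)
    (hℬs : ∀ t ∈ ℬ, t ⊆ insert a s) (heq : 2 ^ #(insert a s) * #(𝒜 ∩ ℬ) = #𝒜 * #ℬ) :
    2 ^ #s * #(𝒜.nonMemberSubfamily a ∩ ℬ.nonMemberSubfamily a) =
        #(𝒜.nonMemberSubfamily a) * #(ℬ.nonMemberSubfamily a) ∧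
      2 ^ #s * #(𝒜.memberSubfamily a ∩ ℬ.memberSubfamily a) =
        #(𝒜.memberSubfamily a) * #(ℬ.memberSubfamily a) ∧
      (#(𝒜.memberSubfamily a) = #(𝒜.nonMemberSubfamily a) ∨
        #(ℬ.nonMemberSubfamily a) = #(ℬ.memberSubfamily a)) := by
  rw [card_insert_of_notMem ha, ← card_memberSubfamily_add_card_nonMemberSubfamily a 𝒜,
    ← card_memberSubfamily_add_card_nonMemberSubfamily a ℬ,
    ← card_memberSubfamily_add_card_nonMemberSubfamily a (𝒜 ∩ ℬ),
    memberSubfamily_inter, nonMemberSubfamily_inter, pow_succ'] at heq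
  exact Nat.eq_and_eq_of_two_mul_add_eq
    (card_le_card h𝒜.memberSubfamily_subset_nonMemberSubfamily)
    (card_le_card (hℬ.nonMemberSubfamily_subset_memberSubfamily hℬs))
    (h𝒜.nonMemberSubfamily.card_inter_le_of_isUpperSetIn (hℬ.nonMemberSubfamily ha)
      (subset_of_mem_nonMemberSubfamily h𝒜s) (subset_of_mem_nonMemberSubfamily hℬs))
    (h𝒜.memberSubfamily.card_inter_le_of_isUpperSetIn (hℬ.memberSubfamily ha)
      (subset_of_mem_memberSubfamily h𝒜s) (subset_of_mem_memberSubfamily hℬs)) heq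

/-- In the equality case of Harris-Kleitman, intersecting with `ℬ` does not decrease the average
size of a member of `𝒜`, and strictly increases it if `∅ ∈ 𝒜` and `ℬ` is proper and nonempty. -/
theorem IsLowerSet.totalCard_mul_card_le (h𝒜 : IsLowerSet (𝒜 : Set (Finset α)))
    (hℬ : IsUpperSetIn s ℬ) (h𝒜s : ∀ t ∈ 𝒜, t ⊆ s) (hℬs : ∀ t ∈ ℬ, t ⊆ s)
    (heq : 2 ^ #s * #(𝒜 ∩ ℬ) = #𝒜 * #ℬ) :
    totalCard 𝒜 * #ℬ ≤ 2 ^ #s * totalCard (𝒜 ∩ ℬ) ∧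
      (∅ ∈ 𝒜 → ∅ ∉ ℬ → ℬ.Nonempty → totalCard 𝒜 * #ℬ < 2 ^ #s * totalCard (𝒜 ∩ ℬ)) := by
  induction s using Finset.induction generalizing 𝒜 ℬ with
  | empty =>
    have h𝒜₀ : totalCard 𝒜 = 0 :=
      sum_eq_zero fun t ht => card_eq_zero.2 (subset_empty.1 (h𝒜s t ht))
    refine ⟨by simp [h𝒜₀], fun _ hℬ₀ ⟨t, ht⟩ => (hℬ₀ ?_).elim⟩
    rwa [← subset_empty.1 (hℬs t ht)]
  | insert z s hz ih =>
    obtain ⟨e₀, e₁, hcase⟩ := h𝒜.card_inter_eq_of_card_inter_eq_insert hℬ hz h𝒜s hℬs heq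
    obtain ⟨w₀, s₀⟩ := ih h𝒜.nonMemberSubfamily (hℬ.nonMemberSubfamily hz)
      (subset_of_mem_nonMemberSubfamily h𝒜s) (subset_of_mem_nonMemberSubfamily hℬs) e₀
    obtain ⟨w₁, -⟩ := ih h𝒜.memberSubfamily (hℬ.memberSubfamily hz)
      (subset_of_mem_memberSubfamily h𝒜s) (subset_of_mem_memberSubfamily hℬs) e₁
    rw [card_insert_of_notMem hz, pow_succ', totalCard_eq_memberSubfamily_add_nonMemberSubfamily z,
      totalCard_eq_memberSubfamily_add_nonMemberSubfamily z (𝒜 ∩ ℬ),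
      memberSubfamily_inter, nonMemberSubfamily_inter,
      ← card_memberSubfamily_add_card_nonMemberSubfamily z ℬ]
    have hu := card_le_card (hℬ.nonMemberSubfamily_subset_memberSubfamily hℬs)
    have hD : #(𝒜.memberSubfamily z) = #(𝒜.nonMemberSubfamily z) →
        totalCard (𝒜.memberSubfamily z) = totalCard (𝒜.nonMemberSubfamily z) := fun h => by
      rw [eq_of_subset_of_card_le h𝒜.memberSubfamily_subset_nonMemberSubfamily h.ge]
    refine ⟨?_, fun h𝒜₀ hℬ₀ hℬne => ?_⟩
    · rcases hcase with hd | hu'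
      · have := Nat.mul_le_mul_left #(𝒜.memberSubfamily z) hu
        rw [hD hd] at w₁ ⊢
        nlinarith
      · rw [hu'] at w₀ ⊢
        nlinarith
    · have h𝒜₀' : ∅ ∈ 𝒜.nonMemberSubfamily z := mem_nonMemberSubfamily.2 ⟨h𝒜₀, notMem_empty z⟩
      have hℬpos : 0 < #ℬ := hℬne.card_pos
      rw [← card_memberSubfamily_add_card_nonMemberSubfamily z ℬ] at hℬpos
      rcases hu.eq_or_lt with hu' | hu'
      · have := s₀ h𝒜₀' (fun h => hℬ₀ (mem_nonMemberSubfamily.1 h).1) (card_pos.1 (by omega))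
        rw [hu'] at this ⊢
        nlinarith
      · have hd := hcase.resolve_right hu'.ne
        have := Nat.mul_lt_mul_of_pos_left hu' (card_pos.2 ⟨_, h𝒜₀'⟩)
        rw [hD hd] at w₁ ⊢
        rw [hd] at e₁ ⊢
        nlinarith

theorem IsLowerSet.lt_card_or_lt_card_of_subset_inter (h𝒟 : IsLowerSet (𝒟 : Set (Finset α)))
    (hℰ : IsLowerSet (ℰ : Set (Finset α))) (h𝒰 : IsUpperSetIn s 𝒰) (h𝒱 : IsUpperSetIn s 𝒱)
    (h𝒟s : ∀ t ∈ 𝒟, t ⊆ s) (hℰs : ∀ t ∈ ℰ, t ⊆ s) (h𝒰s : ∀ t ∈ 𝒰, t ⊆ s)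
    (h𝒱s : ∀ t ∈ 𝒱, t ⊆ s) (h𝒰𝒱 : #𝒰 + #𝒱 = 2 ^ #s) (h𝒜 : 𝒜 ⊆ 𝒟 ∩ 𝒰) (hℬ : ℬ ⊆ ℰ ∩ 𝒱)
    (h𝒟₀ : ∅ ∈ 𝒟) (h𝒰₀ : ∅ ∉ 𝒰) (h𝒰ne : 𝒰.Nonempty) (h𝒱ne : 𝒱.Nonempty) :
    (#𝒜 + #ℬ < #𝒟 ∨ #𝒜 + #ℬ = #𝒟 ∧ totalCard 𝒟 < totalCard 𝒜 + totalCard ℬ) ∨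
      (#𝒜 + #ℬ < #ℰ ∨ #𝒜 + #ℬ = #ℰ ∧ totalCard ℰ < totalCard 𝒜 + totalCard ℬ) := by
  have k𝒟 := h𝒟.card_inter_le_of_isUpperSetIn h𝒰 h𝒟s h𝒰s
  have kℰ := hℰ.card_inter_le_of_isUpperSetIn h𝒱 hℰs h𝒱s
  have i𝒜 := card_le_card h𝒜
  have iℬ := card_le_card hℬ
  have h𝒰pos := h𝒰ne.card_pos
  have h𝒱pos := h𝒱ne.card_pos
  by_contra! h
  obtain ⟨⟨h𝒟le, h𝒟tc⟩, hℰle, hℰtc⟩ := h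
  have m𝒟 := Nat.mul_le_mul_right #𝒰 h𝒟le
  have mℰ := Nat.mul_le_mul_right #𝒱 hℰle
  have hsum : #𝒟 * #𝒰 + #ℰ * #𝒱 = 2 ^ #s * (#𝒜 + #ℬ) := by
    rw [← h𝒰𝒱]
    nlinarith
  have h𝒟eq : #𝒟 = #𝒜 + #ℬ := by
    by_contra hne
    nlinarith [Nat.mul_lt_mul_of_pos_right (lt_of_le_of_ne h𝒟le hne) h𝒰pos]
  have hℰeq : #ℰ = #𝒜 + #ℬ := by
    by_contra hne
    nlinarith [Nat.mul_lt_mul_of_pos_right (lt_of_le_of_ne hℰle hne) h𝒱pos]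
  have h𝒜eq : #𝒜 = #(𝒟 ∩ 𝒰) := by nlinarith
  have hℬeq : #ℬ = #(ℰ ∩ 𝒱) := by nlinarith
  have s𝒟 := (h𝒟.totalCard_mul_card_le h𝒰 h𝒟s h𝒰s (by nlinarith)).2 h𝒟₀ h𝒰₀ h𝒰ne
  have wℰ := (hℰ.totalCard_mul_card_le h𝒱 hℰs h𝒱s (by nlinarith)).1
  rw [← eq_of_subset_of_card_le h𝒜 h𝒜eq.ge] at s𝒟
  rw [← eq_of_subset_of_card_le hℬ hℬeq.ge] at wℰ
  have := Nat.mul_le_mul_right #𝒰 (h𝒟tc h𝒟eq.symm)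
  have := Nat.mul_le_mul_right #𝒱 (hℰtc hℰeq.symm)
  nlinarith

lemma Finset.isUpperSetIn_upperClosure (𝒜 : Finset (Finset α)) (s : Finset α) :
    IsUpperSetIn s {t ∈ s.powerset | ∃ a ∈ 𝒜, a ⊆ t} := by
  intro t u ht htu hus
  simp only [mem_filter, mem_powerset] at ht ⊢
  obtain ⟨-, a, ha, hat⟩ := ht
  exact ⟨hus, a, ha, hat.trans htu⟩

lemma Finset.isUpperSetIn_transversals (𝒜 : Finset (Finset α)) (s : Finset α) :
    IsUpperSetIn s {t ∈ s.powerset | ∀ a ∈ 𝒜, (t ∩ a).Nonempty} := by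
  intro t u ht htu hus
  simp only [mem_filter, mem_powerset] at ht ⊢
  exact ⟨hus, fun a ha => (ht.2 a ha).mono (inter_subset_inter_right htu)⟩

/-- A subset of `s` meets every member of `𝒜` iff its complement in `s` contains none of them. -/
lemma Finset.card_upperClosure_add_card_transversals (h𝒜s : ∀ a ∈ 𝒜, a ⊆ s) :
    #{t ∈ s.powerset | ∃ a ∈ 𝒜, a ⊆ t} + #{t ∈ s.powerset | ∀ a ∈ 𝒜, (t ∩ a).Nonempty} =
      2 ^ #s := by
  rw [← card_powerset, ← card_filter_add_card_filter_not (s := s.powerset)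
    (fun t => ∃ a ∈ 𝒜, a ⊆ t)]
  congr 1
  have key : ∀ t ⊆ s, ((∀ a ∈ 𝒜, (t ∩ a).Nonempty) ↔ ¬∃ a ∈ 𝒜, a ⊆ s \ t) := fun t hts => by
    simp only [subset_sdiff, not_exists, not_and, not_disjoint_iff_nonempty_inter, inter_comm t]
    exact forall₂_congr fun a ha => by simp [h𝒜s a ha]
  refine card_nbij' (s \ ·) (s \ ·) ?_ ?_ ?_ ?_ <;> intro t ht <;>
    simp only [coe_filter, mem_powerset, Set.mem_ofPred_eq] at ht ⊢
  · exact ⟨sdiff_subset, (key t ht.1).1 ht.2⟩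
  · rw [key _ sdiff_subset, sdiff_sdiff_eq_self ht.1]
    exact ⟨sdiff_subset, ht.2⟩
  · exact sdiff_sdiff_eq_self ht.1
  · exact sdiff_sdiff_eq_self ht.1

theorem IsLowerSet.lt_card_or_lt_card_of_crossIntersecting
    (h𝒟 : IsLowerSet (𝒟 : Set (Finset α))) (hℰ : IsLowerSet (ℰ : Set (Finset α)))
    (h𝒟s : ∀ t ∈ 𝒟, t ⊆ s) (hℰs : ∀ t ∈ ℰ, t ⊆ s) (h𝒜𝒟 : 𝒜 ⊆ 𝒟) (hℬℰ : ℬ ⊆ ℰ)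
    (h𝒜 : 𝒜.Nonempty) (hℬ : ℬ.Nonempty) (hcross : ∀ a ∈ 𝒜, ∀ b ∈ ℬ, (a ∩ b).Nonempty) :
    (#𝒜 + #ℬ < #𝒟 ∨ #𝒜 + #ℬ = #𝒟 ∧ totalCard 𝒟 < totalCard 𝒜 + totalCard ℬ) ∨
      (#𝒜 + #ℬ < #ℰ ∨ #𝒜 + #ℬ = #ℰ ∧ totalCard ℰ < totalCard 𝒜 + totalCard ℬ) := by
  have h𝒜𝒰 : 𝒜 ⊆ 𝒟 ∩ {t ∈ s.powerset | ∃ a ∈ 𝒜, a ⊆ t} := fun a ha =>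
    mem_inter.2 ⟨h𝒜𝒟 ha, mem_filter.2 ⟨mem_powerset.2 (h𝒟s a (h𝒜𝒟 ha)), a, ha, subset_rfl⟩⟩
  have hℬ𝒱 : ℬ ⊆ ℰ ∩ {t ∈ s.powerset | ∀ a ∈ 𝒜, (t ∩ a).Nonempty} := fun b hb =>
    mem_inter.2 ⟨hℬℰ hb, mem_filter.2 ⟨mem_powerset.2 (hℰs b (hℬℰ hb)),
      fun a ha => inter_comm a b ▸ hcross a ha b hb⟩⟩
  obtain ⟨a, ha⟩ := h𝒜
  obtain ⟨b, hb⟩ := hℬ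
  have h𝒰₀ : ∅ ∉ {t ∈ s.powerset | ∃ a ∈ 𝒜, a ⊆ t} := fun h => by
    obtain ⟨-, a', ha', ha'₀⟩ := mem_filter.1 h
    simpa [subset_empty.1 ha'₀] using hcross a' ha' b hb
  exact h𝒟.lt_card_or_lt_card_of_subset_inter hℰ (isUpperSetIn_upperClosure 𝒜 s)
    (isUpperSetIn_transversals 𝒜 s) h𝒟s hℰs (fun t ht => mem_powerset.1 (mem_filter.1 ht).1)
    (fun t ht => mem_powerset.1 (mem_filter.1 ht).1)
    (card_upperClosure_add_card_transversals fun a ha => h𝒟s a (h𝒜𝒟 ha)) h𝒜𝒰 hℬ𝒱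
    (h𝒟 (empty_subset a) (h𝒜𝒟 ha)) h𝒰₀ ⟨a, (mem_inter.1 (h𝒜𝒰 ha)).2⟩
    ⟨b, (mem_inter.1 (hℬ𝒱 hb)).2⟩

def Finset.linkAvoiding (a b : α) (𝒜 : Finset (Finset α)) : Finset (Finset α) :=
  (𝒜.nonMemberSubfamily b).memberSubfamily a

lemma Finset.mem_linkAvoiding :
    s ∈ linkAvoiding a b 𝒜 ↔ insert a s ∈ 𝒜 ∧ b ∉ insert a s ∧ a ∉ s := by
  simp [linkAvoiding, and_assoc]

lemma IsLowerSet.linkAvoiding (h : IsLowerSet (𝒜 : Set (Finset α))) (a b : α) :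
    IsLowerSet (linkAvoiding a b 𝒜 : Set (Finset α)) :=
  h.nonMemberSubfamily.memberSubfamily

lemma IsLowerSet.linkAvoiding_subset (h : IsLowerSet (𝒜 : Set (Finset α))) (a b : α) :
    Finset.linkAvoiding a b 𝒜 ⊆ 𝒜 :=
  h.nonMemberSubfamily.memberSubfamily_subset_nonMemberSubfamily.trans
    ((filter_subset _ _).trans (filter_subset _ _))

lemma Finset.linkAvoiding_mono (h : 𝒜 ⊆ ℬ) : linkAvoiding a b 𝒜 ⊆ linkAvoiding a b ℬ :=
  fun _ ht => mem_linkAvoiding.2 <| (mem_linkAvoiding.1 ht).imp_left (@h _)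

lemma Finset.linkAvoiding_nonempty (hab : ∀ t ∈ 𝒜, a ∈ t ∨ b ∈ t) (h : ∃ t ∈ 𝒜, b ∉ t) :
    (linkAvoiding a b 𝒜).Nonempty := by
  obtain ⟨t, ht, hbt⟩ := h
  have hat := (hab t ht).resolve_right hbt
  exact ⟨t.erase a, mem_linkAvoiding.2 ⟨by rwa [insert_erase hat], by rwa [insert_erase hat],
    notMem_erase a t⟩⟩

lemma Finset.inter_nonempty_of_mem_linkAvoiding (h𝒜 : ∀ s ∈ 𝒜, ∀ t ∈ 𝒜, (s ∩ t).Nonempty)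
    {s t : Finset α} (hs : s ∈ linkAvoiding a b 𝒜) (ht : t ∈ linkAvoiding b a 𝒜) :
    (s ∩ t).Nonempty := by
  rw [mem_linkAvoiding] at hs ht
  obtain ⟨x, hx⟩ := h𝒜 _ hs.1 _ ht.1
  rw [mem_inter] at hx
  have hxa : x ≠ a := by rintro rfl; exact ht.2.1 hx.2
  have hxb : x ≠ b := by rintro rfl; exact hs.2.1 hx.1
  exact ⟨x, mem_inter.2 ⟨(mem_insert.1 hx.1).resolve_left hxa,
    (mem_insert.1 hx.2).resolve_left hxb⟩⟩

lemma Finset.sum_eq_add_sum_filter_of_forall_mem_or_mem {β : Type*}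
    [AddCommMonoid β] (hab : ∀ t ∈ 𝒜, a ∈ t ∨ b ∈ t) (w : Finset α → β) :
    ∑ t ∈ 𝒜, w t = ∑ t ∈ 𝒜.nonMemberSubfamily b with a ∈ t, w t +
      ∑ t ∈ 𝒜.nonMemberSubfamily a with b ∈ t, w t + ∑ t ∈ 𝒜 with a ∈ t ∧ b ∈ t, w t := by
  simp only [nonMemberSubfamily, filter_filter, sum_filter, ← sum_add_distrib]
  refine sum_congr rfl fun t ht => ?_
  rcases hab t ht with h | h <;> by_cases h' : a ∈ t <;> by_cases h'' : b ∈ t <;> simp_all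

lemma Finset.sum_filter_mem_eq_sum_nonMemberSubfamily_add {β : Type*} [AddCommMonoid β] (b : α)
    (w : Finset α → β) :
    ∑ t ∈ 𝒜 with a ∈ t, w t =
      ∑ t ∈ 𝒜.nonMemberSubfamily b with a ∈ t, w t + ∑ t ∈ 𝒜 with a ∈ t ∧ b ∈ t, w t := by
  simp only [nonMemberSubfamily, filter_filter, sum_filter, ← sum_add_distrib]
  refine sum_congr rfl fun t _ => ?_
  by_cases h' : a ∈ t <;> by_cases h'' : b ∈ t <;> simp_all

lemma Finset.card_lt_or_totalCard_lt_of_linkAvoiding (h𝒜𝒞 : 𝒜 ⊆ 𝒞)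
    (hab : ∀ t ∈ 𝒜, a ∈ t ∨ b ∈ t)
    (h : #(linkAvoiding a b 𝒜) + #(linkAvoiding b a 𝒜) < #(linkAvoiding a b 𝒞) ∨
      #(linkAvoiding a b 𝒜) + #(linkAvoiding b a 𝒜) = #(linkAvoiding a b 𝒞) ∧
        totalCard (linkAvoiding a b 𝒞) <
          totalCard (linkAvoiding a b 𝒜) + totalCard (linkAvoiding b a 𝒜)) :
    #𝒜 < #{t ∈ 𝒞 | a ∈ t} ∨
      #{t ∈ 𝒞 | a ∈ t} = #𝒜 ∧ totalCard {t ∈ 𝒞 | a ∈ t} < totalCard 𝒜 := by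
  have c𝒜 := sum_eq_add_sum_filter_of_forall_mem_or_mem hab fun _ => 1
  have t𝒜 : totalCard 𝒜 = _ := sum_eq_add_sum_filter_of_forall_mem_or_mem hab card
  have c𝒞 := sum_filter_mem_eq_sum_nonMemberSubfamily_add (𝒜 := 𝒞) (a := a) b fun _ => 1
  have t𝒞 : totalCard {t ∈ 𝒞 | a ∈ t} = _ :=
    sum_filter_mem_eq_sum_nonMemberSubfamily_add (𝒜 := 𝒞) (a := a) b card
  simp only [← card_eq_sum_ones] at c𝒜 c𝒞
  have := totalCard_memberSubfamily_add_card a (𝒜.nonMemberSubfamily b)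
  have := totalCard_memberSubfamily_add_card b (𝒜.nonMemberSubfamily a)
  have := totalCard_memberSubfamily_add_card a (𝒞.nonMemberSubfamily b)
  have := card_memberSubfamily a (𝒜.nonMemberSubfamily b)
  have := card_memberSubfamily b (𝒜.nonMemberSubfamily a)
  have := card_memberSubfamily a (𝒞.nonMemberSubfamily b)
  have hsub : {t ∈ 𝒜 | a ∈ t ∧ b ∈ t} ⊆ {t ∈ 𝒞 | a ∈ t ∧ b ∈ t} := filter_subset_filter _ h𝒜𝒞
  unfold totalCard linkAvoiding at *
  rcases (card_le_card hsub).lt_or_eq with hlt | heq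
  · omega
  · have := congrArg (∑ t ∈ ·, #t) (eq_of_subset_of_card_le hsub heq.ge)
    omega

lemma Finset.isLowerSet_biUnion_powerset (𝒜 : Finset (Finset α)) :
    IsLowerSet (𝒜.biUnion powerset : Set (Finset α)) := by
  intro s t hts hs
  simp only [coe_biUnion, mem_coe, coe_powerset, Set.mem_iUnion, Set.mem_preimage,
    Set.mem_powerset_iff, exists_prop] at hs ⊢
  obtain ⟨u, hu, hsu⟩ := hs
  exact ⟨u, hu, hts.trans hsu⟩

end

/-- If an intersecting family `F` lies in the union of the stars of `a` and `b` of the downset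
`C` it generates, but in neither single star, then there is an intersecting family
`F' ⊆ C`, still contained in the union of the two stars, which is either strictly larger,
or of the same size with strictly smaller total size of members. -/
theorem stmt_2 {α : Type*} [DecidableEq α] (F : Finset (Finset α)) (a b : α)
    (hF : ∀ A ∈ F, ∀ B ∈ F, (A ∩ B).Nonempty)
    (hab : ∀ B ∈ F, a ∈ B ∨ b ∈ B)
    (hna : ∃ B ∈ F, a ∉ B) (hnb : ∃ B ∈ F, b ∉ B) :
    let C : Finset (Finset α) := F.biUnion Finset.powerset
    ∃ F' : Finset (Finset α), F' ⊆ C ∧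
      (∀ A ∈ F', ∀ B ∈ F', (A ∩ B).Nonempty) ∧
      (∀ B ∈ F', a ∈ B ∨ b ∈ B) ∧
      (F.card < F'.card ∨
        (F'.card = F.card ∧ ∑ B ∈ F', B.card < ∑ B ∈ F, B.card)) := by
  intro C
  have hC : IsLowerSet (C : Set (Finset α)) := isLowerSet_biUnion_powerset F
  have hFC : F ⊆ C := fun B hB => mem_biUnion.2 ⟨B, hB, mem_powerset_self B⟩
  have hba : ∀ B ∈ F, b ∈ B ∨ a ∈ B := fun B hB => (hab B hB).symm
  have hground : ∀ c d, ∀ t ∈ linkAvoiding c d C, t ⊆ C.sup id :=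
    fun c d t ht => le_sup (f := id) (hC.linkAvoiding_subset c d ht)
  have hstar : ∀ c, ∀ A ∈ {t ∈ C | c ∈ t}, ∀ B ∈ {t ∈ C | c ∈ t}, (A ∩ B).Nonempty :=
    fun c A hA B hB => ⟨c, mem_inter.2 ⟨(mem_filter.1 hA).2, (mem_filter.1 hB).2⟩⟩
  rcases (hC.linkAvoiding a b).lt_card_or_lt_card_of_crossIntersecting (hC.linkAvoiding b a)
    (hground a b) (hground b a) (linkAvoiding_mono hFC) (linkAvoiding_mono hFC)
    (linkAvoiding_nonempty hab hnb) (linkAvoiding_nonempty hba hna)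
    (fun _ hs _ ht => inter_nonempty_of_mem_linkAvoiding hF hs ht) with h | h
  · exact ⟨_, filter_subset _ _, hstar a, fun B hB => Or.inl (mem_filter.1 hB).2,
      card_lt_or_totalCard_lt_of_linkAvoiding hFC hab h⟩
  · rw [add_comm #(linkAvoiding a b F), add_comm (totalCard (linkAvoiding a b F))] at h
    exact ⟨_, filter_subset _ _, hstar b, fun B hB => Or.inr (mem_filter.1 hB).2,
      card_lt_or_totalCard_lt_of_linkAvoiding hFC hba h⟩
end

section
/- Let F be an intersecting family all of whose members have size at most 3, and let C be the downset generated by F. Then there exists a vertex a of C such that |F| ≤ |st_C(a)|. -/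
/-!
The star of `a` in the downset of `F` contains the members of `F` through `a`, the singleton `{a}`
and every pair `{a, u}` that lies in a member of `F` without being one. So it suffices to find a
vertex `a` missed by at most `1 + #(newNeighbors F a)` members (`StarDominates`). We may assume
that every vertex is missed by at least two members; then all members have two or three elements.

If two vertices `x, y` cover `F` and `{x, y}` is the only pair in `F`, look at the members through
`x` but not `y`. If they share a second vertex, their third vertices are distinct new neighbours
of `x`. Otherwise their traces form a graph without a common vertex, which contains two disjoint
edges or a triangle; the traces of the members avoiding `x` are 2-element transversals of it, and
there are at most as many of those as vertices. The other families containing pairs have all their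
pairs inside a triangle and are handled in the same way. A 3-uniform family without a 2-cover is
treated at a vertex `a` of maximum degree: the members avoiding `a` are 3-element transversals of
the link `L` of `a`, a vertex `x` lies in at most `deg a - deg_L x` of them, and a case analysis
on the smallest vertex cover of `L` bounds their number by one more than the number of vertices
of `L`.
-/

open Finset

namespace Sterboul

variable {α : Type*} [DecidableEq α]

lemma eq_pair_of_mem {e : Finset α} (he : #e ≤ 2) {x y : α} (hx : x ∈ e) (hy : y ∈ e)
    (hxy : x ≠ y) : e = {x, y} :=
  (eq_of_subset_of_card_le (by simp [insert_subset_iff, hx, hy]) (by rwa [card_pair hxy])).symm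

lemma eq_triple_of_mem {B : Finset α} (hB : #B ≤ 3) {x y z : α} (hx : x ∈ B) (hy : y ∈ B)
    (hz : z ∈ B) (hxy : x ≠ y) (hxz : x ≠ z) (hyz : y ≠ z) : B = {x, y, z} :=
  (eq_of_subset_of_card_le (by simp [insert_subset_iff, hx, hy, hz])
    (by rwa [card_eq_three.2 ⟨x, y, z, hxy, hxz, hyz, rfl⟩])).symm

lemma card_le_card_of_sdiff_subset {T : Finset (Finset α)} {S N : Finset α}
    (hT : ∀ B ∈ T, S ⊆ B ∧ #B = #S + 1) (hN : ∀ B ∈ T, B \ S ⊆ N) : #T ≤ #N := by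
  have hone : ∀ B ∈ T, #(B \ S) = 1 := fun B hB => by
    rw [card_sdiff_of_subset (hT B hB).1, (hT B hB).2]; omega
  have hdisj : (T : Set (Finset α)).PairwiseDisjoint (· \ S) := by
    have hins : ∀ C ∈ T, ∀ w ∈ C \ S, C = insert w S := fun C hC w hw =>
      (eq_of_subset_of_card_le (insert_subset (mem_sdiff.1 hw).1 (hT C hC).1)
        (by rw [card_insert_of_notMem (mem_sdiff.1 hw).2, (hT C hC).2])).symm
    intro B hB B' hB' hne
    refine disjoint_left.2 fun w hw hw' => hne ?_
    rw [hins B hB w hw, hins B' hB' w hw']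
  calc #T = #(T.biUnion (· \ S)) := by
        rw [card_biUnion hdisj, sum_congr rfl hone]; simp
    _ ≤ #N := card_le_card (biUnion_subset.2 hN)

lemma pair_eq_pair_iff {x y z w : α} :
    ({x, y} : Finset α) = {z, w} ↔ x = z ∧ y = w ∨ x = w ∧ y = z := by
  rw [← coe_inj, coe_pair, coe_pair, Set.pair_eq_pair_iff]

lemma exists_eq_pair {e : Finset α} (he : #e = 2) {x : α} (hx : x ∈ e) :
    ∃ y, y ≠ x ∧ e = {x, y} := by
  obtain ⟨y, hy⟩ := card_eq_one.1 (by rw [card_erase_of_mem hx, he] : #(e.erase x) = 1)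
  have hy' : y ∈ e.erase x := hy ▸ mem_singleton_self y
  exact ⟨y, (mem_erase.1 hy').1, by rw [← insert_erase hx, hy]⟩

lemma erase_injOn {S : Finset (Finset α)} {y : α} (hS : ∀ B ∈ S, y ∈ B) :
    Set.InjOn (fun B : Finset α => B.erase y) S := fun B hB B' hB' h => by
  rw [← insert_erase (hS B hB), ← insert_erase (hS B' hB')]
  exact congrArg (insert y) h

/-! ### Transversals of graphs -/

lemma card_le_four_of_forall_not_disjoint {T : Finset (Finset α)} {e₁ e₂ : Finset α}
    (h₁ : #e₁ = 2) (h₂ : #e₂ = 2) (hd : Disjoint e₁ e₂)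
    (hT : ∀ t ∈ T, #t ≤ 2 ∧ ¬Disjoint t e₁ ∧ ¬Disjoint t e₂) : #T ≤ 4 :=
  calc #T ≤ #((e₁ ×ˢ e₂).image fun xy => ({xy.1, xy.2} : Finset α)) := card_le_card fun t ht => by
        obtain ⟨ht2, h₁t, h₂t⟩ := hT t ht
        obtain ⟨x, hxt, hx⟩ := not_disjoint_iff.1 h₁t
        obtain ⟨y, hyt, hy⟩ := not_disjoint_iff.1 h₂t
        have hxy : x ≠ y := fun h => disjoint_left.1 hd hx (h ▸ hy)
        exact mem_image.2 ⟨(x, y), mem_product.2 ⟨hx, hy⟩, (eq_pair_of_mem ht2 hxt hyt hxy).symm⟩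
    _ ≤ #(e₁ ×ˢ e₂) := card_image_le
    _ = 4 := by rw [card_product, h₁, h₂]

lemma card_le_three_of_forall_not_disjoint {T : Finset (Finset α)} {p q r : α}
    (hT : ∀ t ∈ T, #t ≤ 2 ∧ ¬Disjoint t {p, q} ∧ ¬Disjoint t {q, r} ∧ ¬Disjoint t {p, r})
    (hpq : p ≠ q) (hpr : p ≠ r) (hqr : q ≠ r) : #T ≤ 3 :=
  calc #T ≤ #(powersetCard 2 ({p, q, r} : Finset α)) := card_le_card fun t ht => by
        obtain ⟨ht2, h₁, h₂, h₃⟩ := hT t ht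
        obtain ⟨u, hut, hu⟩ := not_disjoint_iff.1 h₁
        obtain ⟨v, hvt, hv⟩ := not_disjoint_iff.1 h₂
        obtain ⟨w, hwt, hw⟩ := not_disjoint_iff.1 h₃
        simp only [mem_insert, mem_singleton] at hu hv hw
        obtain ⟨x, y, hxy, hx, hy, hxs, hys⟩ : ∃ x y, x ≠ y ∧ x ∈ t ∧ y ∈ t ∧
            x ∈ ({p, q, r} : Finset α) ∧ y ∈ ({p, q, r} : Finset α) := by
          by_cases huv : u = v
          · exact ⟨u, w, by grind, hut, hwt, by simp only [mem_insert, mem_singleton]; grind,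
              by simp only [mem_insert, mem_singleton]; grind⟩
          · exact ⟨u, v, huv, hut, hvt, by simp only [mem_insert, mem_singleton]; grind,
              by simp only [mem_insert, mem_singleton]; grind⟩
        rw [eq_pair_of_mem ht2 hx hy hxy, mem_powersetCard, card_pair hxy]
        exact ⟨by simp [insert_subset_iff, hxs, hys], rfl⟩
    _ = 3 := by rw [card_powersetCard, card_eq_three.2 ⟨p, q, r, hpq, hpr, hqr, rfl⟩]; rfl

lemma exists_disjoint_or_triangle {G : Finset (Finset α)} (hG : ∀ e ∈ G, #e = 2)
    (hGne : G.Nonempty) (hGc : ∀ v, ∃ e ∈ G, v ∉ e) :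
    (∃ e₁ ∈ G, ∃ e₂ ∈ G, Disjoint e₁ e₂) ∨
      ∃ p q r, p ≠ q ∧ p ≠ r ∧ q ≠ r ∧ {p, q} ∈ G ∧ {q, r} ∈ G ∧ {p, r} ∈ G := by
  obtain ⟨e₁, he₁⟩ := hGne
  obtain ⟨p, q, hpq, rfl⟩ := card_eq_two.1 (hG _ he₁)
  obtain ⟨e₂, he₂, hp₂⟩ := hGc p
  by_cases d₁₂ : Disjoint {p, q} e₂
  · exact Or.inl ⟨_, he₁, _, he₂, d₁₂⟩
  obtain ⟨r, hrq, rfl⟩ : ∃ r, r ≠ q ∧ e₂ = {q, r} := by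
    obtain ⟨w, hw, hw₂⟩ := not_disjoint_iff.1 d₁₂
    rcases mem_insert.1 hw with rfl | hw
    · exact absurd hw₂ hp₂
    · exact exists_eq_pair (hG _ he₂) (mem_singleton.1 hw ▸ hw₂)
  have hrp : r ≠ p := by rintro rfl; simp at hp₂
  obtain ⟨e₃, he₃, hq₃⟩ := hGc q
  by_cases d₁₃ : Disjoint {p, q} e₃
  · exact Or.inl ⟨_, he₁, _, he₃, d₁₃⟩
  by_cases d₂₃ : Disjoint {q, r} e₃
  · exact Or.inl ⟨_, he₂, _, he₃, d₂₃⟩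
  have hp₃ : p ∈ e₃ := by
    obtain ⟨w, hw, hw₃⟩ := not_disjoint_iff.1 d₁₃
    simp only [mem_insert, mem_singleton] at hw
    rcases hw with rfl | rfl
    · exact hw₃
    · exact absurd hw₃ hq₃
  have hr₃ : r ∈ e₃ := by
    obtain ⟨w, hw, hw₃⟩ := not_disjoint_iff.1 d₂₃
    simp only [mem_insert, mem_singleton] at hw
    rcases hw with rfl | rfl
    · exact absurd hw₃ hq₃
    · exact hw₃
  exact Or.inr ⟨p, q, r, hpq, hrp.symm, hrq.symm, he₁, he₂,
    eq_pair_of_mem (hG _ he₃).le hp₃ hr₃ hrp.symm ▸ he₃⟩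

lemma card_le_card_biUnion_of_forall_not_disjoint {G T : Finset (Finset α)}
    (hG : ∀ e ∈ G, #e = 2) (hGne : G.Nonempty) (hGc : ∀ v, ∃ e ∈ G, v ∉ e)
    (hT : ∀ t ∈ T, #t ≤ 2 ∧ ∀ e ∈ G, ¬Disjoint t e) : #T ≤ #(G.biUnion id) := by
  have hsub : ∀ {e}, e ∈ G → e ⊆ G.biUnion id := fun he => subset_biUnion_of_mem id he
  rcases exists_disjoint_or_triangle hG hGne hGc with
    ⟨e₁, he₁, e₂, he₂, hd⟩ | ⟨p, q, r, hpq, hpr, hqr, h₁, h₂, h₃⟩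
  · calc #T ≤ 4 := card_le_four_of_forall_not_disjoint (hG _ he₁) (hG _ he₂) hd
          fun t ht => ⟨(hT t ht).1, (hT t ht).2 _ he₁, (hT t ht).2 _ he₂⟩
      _ = #(e₁ ∪ e₂) := by rw [card_union_of_disjoint hd, hG _ he₁, hG _ he₂]
      _ ≤ _ := card_le_card (union_subset (hsub he₁) (hsub he₂))
  · calc #T ≤ 3 := card_le_three_of_forall_not_disjoint
          (fun t ht => ⟨(hT t ht).1, (hT t ht).2 _ h₁, (hT t ht).2 _ h₂, (hT t ht).2 _ h₃⟩)
          hpq hpr hqr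
      _ = #({p, q, r} : Finset α) := (card_eq_three.2 ⟨p, q, r, hpq, hpr, hqr, rfl⟩).symm
      _ ≤ _ := card_le_card (by
          simp [insert_subset_iff, hsub h₁ (mem_insert_self p _), hsub h₂ (mem_insert_self q _),
            hsub h₂ (mem_insert_of_mem (mem_singleton_self r))])

/-! ### Star-dominating vertices -/

variable {F : Finset (Finset α)}

lemma mem_of_pair_mem (hF : (F : Set (Finset α)).Intersecting) {x u : α} (hxu : {x, u} ∈ F)
    {B : Finset α} (hB : B ∈ F) (hxB : x ∉ B) : u ∈ B := by
  obtain ⟨w, hw, hwB⟩ := not_disjoint_iff.1 (hF hxu hB)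
  rcases mem_insert.1 hw with rfl | hw
  · exact absurd hwB hxB
  · rwa [mem_singleton.1 hw] at hwB

def newNeighbors (F : Finset (Finset α)) (a : α) : Finset α :=
  {u ∈ {B ∈ F | a ∈ B}.biUnion id | u ≠ a ∧ {a, u} ∉ F}

lemma mem_newNeighbors {a u : α} :
    u ∈ newNeighbors F a ↔ (∃ B ∈ F, a ∈ B ∧ u ∈ B) ∧ u ≠ a ∧ {a, u} ∉ F := by
  simp [newNeighbors, and_assoc]

def StarDominates (F : Finset (Finset α)) (a : α) : Prop :=
  (∃ B ∈ F, a ∈ B) ∧ #{B ∈ F | a ∉ B} ≤ #(newNeighbors F a) + 1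

theorem StarDominates.card_le_card_filter_mem {a : α} (ha : StarDominates F a)
    (hF : (F : Set (Finset α)).Intersecting) : #F ≤ #{B ∈ F.biUnion powerset | a ∈ B} := by
  have hC : ∀ {S B}, B ∈ F → S ⊆ B → S ∈ F.biUnion powerset := fun hB hS =>
    mem_biUnion.2 ⟨_, hB, mem_powerset.2 hS⟩
  by_cases hs : {a} ∈ F
  · refine card_le_card fun B hB => mem_filter.2 ⟨hC hB subset_rfl, ?_⟩
    obtain ⟨w, hw, hwB⟩ := not_disjoint_iff.1 (hF hs hB)
    rwa [mem_singleton.1 hw] at hwB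
  obtain ⟨⟨A, hA, haA⟩, hcard⟩ := ha
  set P := (newNeighbors F a).image (fun u => ({a, u} : Finset α))
  have hP : #P = #(newNeighbors F a) := card_image_of_injOn fun u hu v hv huv => by
    have hu := (mem_newNeighbors.1 hu).2.1
    have : u ∈ ({a, v} : Finset α) := by rw [← show ({a, u} : Finset α) = {a, v} from huv]; simp
    simpa [hu] using this
  have hsub : {B ∈ F | a ∈ B} ∪ insert {a} P ⊆ {B ∈ F.biUnion powerset | a ∈ B} := by
    intro S hS
    simp only [mem_union, mem_insert, mem_filter, P, mem_image] at hS
    rcases hS with ⟨hSF, haS⟩ | rfl | ⟨u, hu, rfl⟩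
    · exact mem_filter.2 ⟨hC hSF subset_rfl, haS⟩
    · exact mem_filter.2 ⟨hC hA (by simpa using haA), mem_singleton_self a⟩
    · obtain ⟨⟨B, hB, haB, huB⟩, -, -⟩ := mem_newNeighbors.1 hu
      exact mem_filter.2 ⟨hC hB (by simp [insert_subset_iff, haB, huB]), mem_insert_self a _⟩
  have hdisj : Disjoint {B ∈ F | a ∈ B} (insert {a} P) := by
    refine disjoint_left.2 fun S hS hS' => ?_
    simp only [mem_insert, P, mem_image] at hS'
    rcases hS' with rfl | ⟨u, hu, rfl⟩
    · exact hs (mem_filter.1 hS).1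
    · exact (mem_newNeighbors.1 hu).2.2 (mem_filter.1 hS).1
  have haP : {a} ∉ P := by
    simp only [P, mem_image, not_exists, not_and]
    intro u hu h
    exact (mem_newNeighbors.1 hu).2.1
      (mem_singleton.1 (h ▸ mem_insert_of_mem (mem_singleton_self u)))
  calc #F = #{B ∈ F | a ∈ B} + #{B ∈ F | a ∉ B} := (card_filter_add_card_filter_not _).symm
    _ ≤ #({B ∈ F | a ∈ B} ∪ insert {a} P) := by
        rw [card_union_of_disjoint hdisj, card_insert_of_notMem haP, hP]; omega
    _ ≤ _ := card_le_card hsub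

theorem starDominates_of_sdiff_subset {a : α} (ha : ∃ B ∈ F, a ∈ B) {T : Finset (Finset α)}
    {S : Finset α} (hT : ∀ B ∈ T, S ⊆ B ∧ #B = #S + 1) (hN : ∀ B ∈ T, B \ S ⊆ newNeighbors F a)
    (hle : #{B ∈ F | a ∉ B} ≤ #T + 1) : StarDominates F a :=
  ⟨ha, hle.trans (Nat.add_le_add_right (card_le_card_of_sdiff_subset hT hN) 1)⟩

lemma exists_not_mem_of_two_le {a : α} (h : 2 ≤ #{B ∈ F | a ∉ B}) : ∃ B ∈ F, a ∉ B := by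
  obtain ⟨B, hB⟩ := card_pos.1 (by omega : 0 < #{B ∈ F | a ∉ B})
  exact ⟨B, (mem_filter.1 hB).1, (mem_filter.1 hB).2⟩

lemma card_filter_not_mem_le (h23 : ∀ B ∈ F, #B = 2 ∨ #B = 3) {a : α} {e : Finset α}
    (he : ∀ B ∈ F, a ∉ B → #B = 2 → B = e) :
    #{B ∈ F | a ∉ B} ≤ #{B ∈ F | a ∉ B ∧ #B = 3} + 1 :=
  calc #{B ∈ F | a ∉ B} ≤ #(insert e {B ∈ F | a ∉ B ∧ #B = 3}) := card_le_card fun B hB => by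
        obtain ⟨hBF, haB⟩ := mem_filter.1 hB
        rcases h23 B hBF with h | h
        · exact mem_insert.2 (Or.inl (he B hBF haB h))
        · exact mem_insert_of_mem (mem_filter.2 ⟨hBF, haB, h⟩)
    _ ≤ _ := card_insert_le _ _

/-! ### Families covered by two vertices -/

lemma card_le_card_biUnion_image_erase {x y : α} {X Y : Finset (Finset α)}
    (hX : ∀ B ∈ X, x ∈ B ∧ y ∉ B ∧ #B = 3) (hY : ∀ B ∈ Y, y ∈ B ∧ x ∉ B ∧ #B = 3)
    (hXY : ∀ B ∈ X, ∀ B' ∈ Y, ¬Disjoint B' B) (hXne : X.Nonempty) (hp : ∀ p ≠ x, ∃ B ∈ X, p ∉ B) :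
    #Y ≤ #((X.image (·.erase x)).biUnion id) := by
  -- `B ↦ B.erase y` is injective on `Y`, and its images meet every `B.erase x`, `B ∈ X`
  rw [← card_image_of_injOn (erase_injOn fun B hB => (hY B hB).1)]
  refine card_le_card_biUnion_of_forall_not_disjoint ?_ (hXne.image _) (fun v => ?_) ?_
  · simp only [mem_image, forall_exists_index, and_imp]
    rintro _ B hB rfl
    rw [card_erase_of_mem (hX B hB).1, (hX B hB).2.2]
  · by_cases hvx : v = x
    · obtain ⟨B, hB⟩ := hXne
      exact ⟨_, mem_image_of_mem _ hB, by simp [hvx]⟩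
    · obtain ⟨B, hB, hvB⟩ := hp v hvx
      exact ⟨_, mem_image_of_mem _ hB, fun h => hvB (mem_of_mem_erase h)⟩
  · simp only [mem_image, forall_exists_index, and_imp]
    rintro _ B' hB' rfl
    refine ⟨by rw [card_erase_of_mem (hY B' hB').1, (hY B' hB').2.2], ?_⟩
    rintro _ B hB rfl
    obtain ⟨w, hwB', hwB⟩ := not_disjoint_iff.1 (hXY B hB B' hB')
    refine not_disjoint_iff.2 ⟨w, mem_erase.2 ⟨?_, hwB'⟩, mem_erase.2 ⟨?_, hwB⟩⟩
    · rintro rfl; exact (hX B hB).2.1 hwB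
    · rintro rfl; exact (hY B' hB').2.1 hwB'

theorem starDominates_of_cover (hF : (F : Set (Finset α)).Intersecting)
    (h23 : ∀ B ∈ F, #B = 2 ∨ #B = 3) {x y : α} (hcov : ∀ B ∈ F, x ∈ B ∨ y ∈ B)
    (hpair : ∀ e ∈ F, #e = 2 → e = {x, y}) (hX : ∃ B ∈ F, y ∉ B)
    (hle : #{B ∈ F | x ∉ B} ≤ #{B ∈ F | y ∉ B}) : StarDominates F x := by
  have hX3 : ∀ B ∈ {B ∈ F | y ∉ B}, x ∈ B ∧ y ∉ B ∧ #B = 3 := fun B hB => by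
    obtain ⟨hBF, hyB⟩ := mem_filter.1 hB
    refine ⟨(hcov B hBF).resolve_right hyB, hyB, (h23 B hBF).resolve_left fun h2 => hyB ?_⟩
    simp [hpair B hBF h2]
  have hY3 : ∀ B ∈ {B ∈ F | x ∉ B}, y ∈ B ∧ x ∉ B ∧ #B = 3 := fun B hB => by
    obtain ⟨hBF, hxB⟩ := mem_filter.1 hB
    refine ⟨(hcov B hBF).resolve_left hxB, hxB, (h23 B hBF).resolve_left fun h2 => hxB ?_⟩
    simp [hpair B hBF h2]
  have hnew : ∀ B ∈ {B ∈ F | y ∉ B}, B.erase x ⊆ newNeighbors F x := fun B hB u hu => by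
    obtain ⟨hux, huB⟩ := mem_erase.1 hu
    obtain ⟨hBF, hyB⟩ := mem_filter.1 hB
    refine mem_newNeighbors.2 ⟨⟨B, hBF, (hX3 B hB).1, huB⟩, hux, fun hxu => ?_⟩
    have hu' : u ∈ ({x, y} : Finset α) := hpair _ hxu (card_pair hux.symm) ▸ by simp
    rcases mem_insert.1 hu' with rfl | hu'
    · exact hux rfl
    · exact hyB (mem_singleton.1 hu' ▸ huB)
  obtain ⟨B₀, hB₀, hyB₀⟩ := hX
  have hB₀' : B₀ ∈ {B ∈ F | y ∉ B} := mem_filter.2 ⟨hB₀, hyB₀⟩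
  by_cases hp : ∃ p ≠ x, ∀ B ∈ {B ∈ F | y ∉ B}, p ∈ B
  · obtain ⟨p, hpx, hp⟩ := hp
    exact starDominates_of_sdiff_subset ⟨B₀, hB₀, (hX3 B₀ hB₀').1⟩ (S := {x, p})
      (fun B hB => ⟨by simp [insert_subset_iff, (hX3 B hB).1, hp B hB],
        by rw [(hX3 B hB).2.2, card_pair hpx.symm]⟩)
      (fun B hB => (sdiff_subset_sdiff subset_rfl (by simp)).trans
        ((erase_eq B x).symm ▸ hnew B hB)) (Nat.le_succ_of_le hle)
  push Not at hp
  refine ⟨⟨B₀, hB₀, (hX3 B₀ hB₀').1⟩, (card_le_card_biUnion_image_erase hX3 hY3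
    (fun B hB B' hB' => hF (mem_filter.1 hB').1 (mem_filter.1 hB).1) ⟨B₀, hB₀'⟩ hp).trans
    (Nat.le_succ_of_le (card_le_card ?_))⟩
  simp only [biUnion_subset, mem_image, forall_exists_index, and_imp]
  rintro _ B hB rfl
  exact hnew B hB

theorem starDominates_of_pairs_subset_triangle (hF : (F : Set (Finset α)).Intersecting)
    (h23 : ∀ B ∈ F, #B = 2 ∨ #B = 3) {x y z : α} (hxz : x ≠ z) (hx : ∃ B ∈ F, x ∈ B)
    (hyx : ∀ B ∈ F, y ∉ B → x ∈ B) (heyz : {y, z} ∈ F)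
    (hpair : ∀ e ∈ F, #e = 2 → e = {x, y} ∨ e = {y, z} ∨ e = {x, z})
    (hle : #{B ∈ F | x ∉ B ∧ #B = 3} ≤ #{B ∈ F | y ∉ B ∧ #B = 3}) : StarDominates F x := by
  refine starDominates_of_sdiff_subset hx (T := {B ∈ F | y ∉ B ∧ #B = 3}) (S := {x, z})
    (fun B hB => ?_) (fun B hB w hw => ?_) ?_
  · obtain ⟨hBF, hyB, hB3⟩ := mem_filter.1 hB
    refine ⟨?_, by rw [hB3, card_pair hxz]⟩
    simp [insert_subset_iff, hyx B hBF hyB, mem_of_pair_mem hF heyz hBF hyB]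
  · obtain ⟨hBF, hyB, -⟩ := mem_filter.1 hB
    obtain ⟨hwB, hwxz⟩ := mem_sdiff.1 hw
    have hwy : w ≠ y := by rintro rfl; exact hyB hwB
    refine mem_newNeighbors.2 ⟨⟨B, hBF, hyx B hBF hyB, hwB⟩, by grind, fun hxw => ?_⟩
    have := hpair _ hxw (card_pair (by grind))
    simp only [pair_eq_pair_iff] at this
    grind
  · refine (card_filter_not_mem_le h23 (e := {y, z}) fun B hBF hxB hB2 => ?_).trans (by omega)
    rcases hpair B hBF hB2 with rfl | rfl | rfl <;> simp_all

theorem starDominates_center_of_two_pairs (hF : (F : Set (Finset α)).Intersecting)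
    (h23 : ∀ B ∈ F, #B = 2 ∨ #B = 3) {c u₁ u₂ : α} (hu : u₁ ≠ u₂)
    (he₁ : {c, u₁} ∈ F) (he₂ : {c, u₂} ∈ F)
    (hpair : ∀ e ∈ F, #e = 2 → e = {c, u₁} ∨ e = {u₁, u₂} ∨ e = {c, u₂})
    {B₀ : Finset α} (hB₀ : B₀ ∈ F) (hcB₀ : c ∈ B₀) (h₁ : u₁ ∉ B₀) (h₂ : u₂ ∉ B₀) :
    StarDominates F c := by
  refine starDominates_of_sdiff_subset ⟨B₀, hB₀, hcB₀⟩ (T := {B ∈ F | c ∉ B ∧ #B = 3})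
    (S := {u₁, u₂}) (fun B hB => ?_) (fun B hB w hw => ?_) ?_
  · obtain ⟨hBF, hcB, hB3⟩ := mem_filter.1 hB
    refine ⟨?_, by rw [hB3, card_pair hu]⟩
    simp [insert_subset_iff, mem_of_pair_mem hF he₁ hBF hcB, mem_of_pair_mem hF he₂ hBF hcB]
  · obtain ⟨hBF, hcB, hB3⟩ := mem_filter.1 hB
    obtain ⟨hwB, hwu⟩ := mem_sdiff.1 hw
    obtain ⟨v, hvB, hvB₀⟩ := not_disjoint_iff.1 (hF hBF hB₀)
    have hB : B = {u₁, u₂, v} := eq_triple_of_mem hB3.le (mem_of_pair_mem hF he₁ hBF hcB)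
      (mem_of_pair_mem hF he₂ hBF hcB) hvB hu (by grind) (by grind)
    have hwv : w = v := by
      rw [hB] at hwB
      simp only [mem_insert, mem_singleton] at hwB hwu
      grind
    subst hwv
    refine mem_newNeighbors.2 ⟨⟨B₀, hB₀, hcB₀, hvB₀⟩, by grind, fun hcw => ?_⟩
    have := hpair _ hcw (card_pair (by grind))
    simp only [pair_eq_pair_iff] at this
    grind
  · refine (card_filter_not_mem_le h23 (e := {u₁, u₂}) fun B hBF hcB hB2 => ?_).trans le_rfl
    rcases hpair B hBF hB2 with rfl | rfl | rfl <;> simp_all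

theorem exists_starDominates_of_two_pairs (hF : (F : Set (Finset α)).Intersecting)
    (h23 : ∀ B ∈ F, #B = 2 ∨ #B = 3) (hm2 : ∀ a, 2 ≤ #{B ∈ F | a ∉ B}) {c u₁ u₂ : α}
    (hcu₁ : c ≠ u₁) (hcu₂ : c ≠ u₂) (hu : u₁ ≠ u₂) (he₁ : {c, u₁} ∈ F) (he₂ : {c, u₂} ∈ F) :
    ∃ a, StarDominates F a := by
  have hpair : ∀ e ∈ F, #e = 2 → e = {c, u₁} ∨ e = {u₁, u₂} ∨ e = {c, u₂} := by
    intro e he he2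
    by_cases hce : c ∈ e
    · obtain ⟨t, htc, rfl⟩ := exists_eq_pair he2 hce
      by_contra h
      simp only [pair_eq_pair_iff] at h
      -- the members avoiding `c` would all be `{u₁, u₂, t}`
      have hle : #{B ∈ F | c ∉ B} ≤ #({{u₁, u₂, t}} : Finset (Finset α)) :=
        card_le_card fun B hB => by
          obtain ⟨hBF, hcB⟩ := mem_filter.1 hB
          refine mem_singleton.2 (eq_triple_of_mem ?_ (mem_of_pair_mem hF he₁ hBF hcB)
            (mem_of_pair_mem hF he₂ hBF hcB) (mem_of_pair_mem hF he hBF hcB) hu (by grind)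
            (by grind))
          rcases h23 B hBF with h | h <;> omega
      have := hm2 c
      rw [card_singleton] at hle
      omega
    · exact Or.inr (Or.inl (eq_pair_of_mem he2.le (mem_of_pair_mem hF he₁ he hce)
        (mem_of_pair_mem hF he₂ he hce) hu))
  by_cases hB₀ : ∃ B₀ ∈ F, c ∈ B₀ ∧ u₁ ∉ B₀ ∧ u₂ ∉ B₀
  · obtain ⟨B₀, hB₀, hc, h₁, h₂⟩ := hB₀
    exact ⟨c, starDominates_center_of_two_pairs hF h23 hu he₁ he₂ hpair hB₀ hc h₁ h₂⟩
  push Not at hB₀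
  rcases le_total #{B ∈ F | u₁ ∉ B ∧ #B = 3} #{B ∈ F | u₂ ∉ B ∧ #B = 3} with h | h
  · refine ⟨u₁, starDominates_of_pairs_subset_triangle hF h23 hcu₁.symm
      ⟨_, he₁, by simp⟩ (fun B hBF hB => ?_) (pair_comm c u₂ ▸ he₂) (fun e he he2 => ?_) h⟩
    · by_contra h₁
      exact hB (hB₀ B hBF (mem_of_pair_mem hF (pair_comm c u₂ ▸ he₂) hBF hB) h₁)
    · rcases hpair e he he2 with rfl | rfl | rfl <;> simp [pair_eq_pair_iff]
  · refine ⟨u₂, starDominates_of_pairs_subset_triangle hF h23 hcu₂.symm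
      ⟨_, he₂, by simp⟩ (fun B hBF hB => ?_) (pair_comm c u₁ ▸ he₁) (fun e he he2 => ?_) h⟩
    · by_contra h₂
      exact h₂ (hB₀ B hBF (mem_of_pair_mem hF (pair_comm c u₁ ▸ he₁) hBF hB) hB)
    · rcases hpair e he he2 with rfl | rfl | rfl <;> simp [pair_eq_pair_iff]

theorem exists_starDominates_of_pair_mem (hF : (F : Set (Finset α)).Intersecting)
    (h23 : ∀ B ∈ F, #B = 2 ∨ #B = 3) (hm2 : ∀ a, 2 ≤ #{B ∈ F | a ∉ B}) {x y : α} (hxy : x ≠ y)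
    (he : {x, y} ∈ F) : ∃ a, StarDominates F a := by
  by_cases h1 : ∀ e ∈ F, #e = 2 → e = {x, y}
  · have hcov : ∀ B ∈ F, x ∈ B ∨ y ∈ B := fun B hB => by
      obtain ⟨w, hw, hwB⟩ := not_disjoint_iff.1 (hF he hB)
      rcases mem_insert.1 hw with rfl | hw
      · exact Or.inl hwB
      · exact Or.inr (mem_singleton.1 hw ▸ hwB)
    rcases le_total #{B ∈ F | x ∉ B} #{B ∈ F | y ∉ B} with h | h
    · exact ⟨x, starDominates_of_cover hF h23 hcov h1 (exists_not_mem_of_two_le (hm2 y)) h⟩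
    · exact ⟨y, starDominates_of_cover hF h23 (fun B hB => (hcov B hB).symm)
        (fun e he h2 => (h1 e he h2).trans (pair_comm x y)) (exists_not_mem_of_two_le (hm2 x)) h⟩
  push Not at h1
  obtain ⟨e, heF, he2, hne⟩ := h1
  obtain ⟨c, hce, hcxy⟩ := not_disjoint_iff.1 (hF heF he)
  obtain ⟨u₁, hu₁, hxy'⟩ := exists_eq_pair (card_pair hxy) hcxy
  obtain ⟨u₂, hu₂, rfl⟩ := exists_eq_pair he2 hce
  rw [hxy'] at he hne
  exact exists_starDominates_of_two_pairs hF h23 hm2 hu₁.symm hu₂.symm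
    (by rintro rfl; exact hne rfl) he heF

/-! ### The link of a vertex of maximum degree -/

section Link

variable {L M : Finset (Finset α)}

def neighbors (L : Finset (Finset α)) (u : α) : Finset α :=
  {e ∈ L | u ∈ e}.biUnion (·.erase u)

lemma mem_neighbors {u w : α} : w ∈ neighbors L u ↔ ∃ e ∈ L, u ∈ e ∧ w ≠ u ∧ w ∈ e := by
  simp [neighbors, and_assoc]

lemma neighbors_subset_biUnion (u : α) : neighbors L u ⊆ L.biUnion id := fun w hw => by
  obtain ⟨e, he, -, -, hwe⟩ := mem_neighbors.1 hw
  exact mem_biUnion.2 ⟨e, he, hwe⟩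

lemma card_filter_mem_le_card_neighbors (hL : ∀ e ∈ L, #e = 2) (u : α) :
    #{e ∈ L | u ∈ e} ≤ #(neighbors L u) :=
  card_le_card_of_sdiff_subset (S := {u})
    (fun e he => ⟨by simpa using (mem_filter.1 he).2, by rw [hL e (mem_filter.1 he).1]; rfl⟩)
    (fun e he => by rw [← erase_eq]; exact subset_biUnion_of_mem (·.erase u) he)

lemma neighbors_subset (hL : ∀ e ∈ L, #e = 2) (hcov : ∀ B ∈ M, ∀ e ∈ L, ¬Disjoint B e)
    {B : Finset α} (hB : B ∈ M) {u : α} (hu : u ∉ B) : neighbors L u ⊆ B := by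
  intro w hw
  obtain ⟨e, he, hue, hwu, hwe⟩ := mem_neighbors.1 hw
  obtain ⟨t, htB, hte⟩ := not_disjoint_iff.1 (hcov B hB e he)
  rw [eq_pair_of_mem (hL e he).le hue hwe hwu.symm] at hte
  simp only [mem_insert, mem_singleton] at hte
  rcases hte with rfl | rfl
  · exact absurd htB hu
  · exact htB

lemma card_le_of_forall_mem (hL : ∀ e ∈ L, #e = 2) (hcov : ∀ B ∈ M, ∀ e ∈ L, ¬Disjoint B e)
    (hdeg : ∀ x, #{B ∈ M | x ∈ B} + #{e ∈ L | x ∈ e} ≤ #L) (hLne : L.Nonempty) {u : α}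
    (hu : ∀ e ∈ L, u ∈ e) : #M ≤ #(L.biUnion id) := by
  obtain ⟨e, he⟩ := hLne
  obtain ⟨s, hsu, rfl⟩ := exists_eq_pair (hL e he) (hu e he)
  -- the degree of `u` in `L` is already `#L`, so no member of `M` contains `u`
  have hMu : ∀ B ∈ M, u ∉ B := fun B hB huB => by
    have := hdeg u
    have : 0 < #{B ∈ M | u ∈ B} := card_pos.2 ⟨B, mem_filter.2 ⟨hB, huB⟩⟩
    rw [filter_true_of_mem hu] at *
    omega
  have hsM : ∀ B ∈ M, s ∈ B := fun B hB =>
    neighbors_subset hL hcov hB (hMu B hB) (mem_neighbors.2 ⟨_, he, by simp, hsu, by simp⟩)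
  have hs := hdeg s
  have hLu := (card_filter_mem_le_card_neighbors hL u).trans
    (card_le_card (neighbors_subset_biUnion u))
  rw [filter_true_of_mem hsM] at hs
  rw [filter_true_of_mem hu] at hLu
  omega

lemma card_neighbors_union_add_two_le (hno1 : ∀ w, ∃ e ∈ L, w ∉ e) {u v : α}
    (huv : ∀ e ∈ L, u ∈ e ∨ v ∈ e) (hLuv : ∀ e ∈ L, u ∈ e → v ∉ e) :
    #(neighbors L u ∪ neighbors L v) + 2 ≤ #(L.biUnion id) := by
  have hmem : ∀ {w e}, e ∈ L → w ∈ e → w ∈ L.biUnion id := fun he hw => mem_biUnion.2 ⟨_, he, hw⟩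
  obtain ⟨eu, heu, hveu⟩ := hno1 v
  obtain ⟨ev, hev, huev⟩ := hno1 u
  have hne : ∀ {w}, w ∈ neighbors L u ∪ neighbors L v → w ≠ u ∧ w ≠ v := fun hw => by
    rcases mem_union.1 hw with hw | hw <;> obtain ⟨e, he, hxe, hw, hwe⟩ := mem_neighbors.1 hw
    · exact ⟨hw, by rintro rfl; exact hLuv e he hxe hwe⟩
    · exact ⟨by rintro rfl; exact hLuv e he hwe hxe, hw⟩
  calc #(neighbors L u ∪ neighbors L v) + 2
        = #(insert u (insert v (neighbors L u ∪ neighbors L v))) := by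
        have huv' : u ≠ v := by rintro rfl; exact huev ((huv ev hev).elim id id)
        rw [card_insert_of_notMem (by simp only [mem_insert, not_or]; exact
          ⟨huv', fun h => (hne h).1 rfl⟩), card_insert_of_notMem fun h => (hne h).2 rfl]
    _ ≤ _ := card_le_card (insert_subset (hmem heu ((huv eu heu).resolve_right hveu))
        (insert_subset (hmem hev ((huv ev hev).resolve_left huev))
          (union_subset (neighbors_subset_biUnion u) (neighbors_subset_biUnion v))))

lemma card_le_of_forall_mem_or_mem (hL : ∀ e ∈ L, #e = 2) (hM : ∀ B ∈ M, #B = 3)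
    (hcov : ∀ B ∈ M, ∀ e ∈ L, ¬Disjoint B e)
    (hdeg : ∀ x, #{B ∈ M | x ∈ B} + #{e ∈ L | x ∈ e} ≤ #L) (hno1 : ∀ w, ∃ e ∈ L, w ∉ e)
    {u v : α} (huv : ∀ e ∈ L, u ∈ e ∨ v ∈ e) {B₀ : Finset α} (hB₀ : B₀ ∈ M) (hu₀ : u ∉ B₀)
    (hv₀ : v ∉ B₀) : #M ≤ #(L.biUnion id) + 1 := by
  have hLuv : ∀ e ∈ L, u ∈ e → v ∉ e := fun e he hue hve => by
    have huv' : u ≠ v := by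
      rintro rfl
      obtain ⟨e', he', hue'⟩ := hno1 u
      exact hue' ((huv e' he').elim id id)
    obtain ⟨t, htB, hte⟩ := not_disjoint_iff.1 (hcov B₀ hB₀ e he)
    rw [eq_pair_of_mem (hL e he).le hue hve huv'] at hte
    simp only [mem_insert, mem_singleton] at hte
    rcases hte with rfl | rfl <;> contradiction
  have hLcard : #L = #{e ∈ L | u ∈ e} + #{e ∈ L | v ∈ e} := by
    rw [← card_filter_add_card_filter_not (p := (u ∈ ·)) (s := L), filter_congr fun e he =>
      ⟨fun hue => (huv e he).resolve_left hue, fun hve hue => hLuv e he hue hve⟩]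
  have hu := card_filter_mem_le_card_neighbors hL u
  have hv := card_filter_mem_le_card_neighbors hL v
  have hEuv : #(neighbors L u ∪ neighbors L v) ≤ 3 := hM B₀ hB₀ ▸ card_le_card
    (union_subset (neighbors_subset hL hcov hB₀ hu₀) (neighbors_subset hL hcov hB₀ hv₀))
  have hW := card_neighbors_union_add_two_le hno1 huv hLuv
  have hEv := card_le_card (subset_union_right (s₁ := neighbors L u) (s₂ := neighbors L v))
  have hdu := hdeg u
  have hdv := hdeg v
  by_cases hEu : 3 ≤ #(neighbors L u)
  · -- every member of `M` avoiding `u` contains, hence equals, `neighbors L u`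
    have hsub : M ⊆ insert (neighbors L u) {B ∈ M | u ∈ B} := fun B hB => by
      by_cases huB : u ∈ B
      · exact mem_insert_of_mem (mem_filter.2 ⟨hB, huB⟩)
      · exact mem_insert.2 (Or.inl (eq_of_subset_of_card_le
          (neighbors_subset hL hcov hB huB) (by rw [hM B hB]; exact hEu)).symm)
    have := (card_le_card hsub).trans (card_insert_le _ _)
    omega
  · obtain ⟨e, he, hue⟩ := hno1 u
    obtain ⟨y, hyv, rfl⟩ := exists_eq_pair (hL e he) ((huv e he).resolve_left hue)
    have hsub : M ⊆ {B ∈ M | v ∈ B} ∪ {B ∈ M | y ∈ B} := fun B hB => by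
      obtain ⟨t, htB, hte⟩ := not_disjoint_iff.1 (hcov B hB _ he)
      simp only [mem_insert, mem_singleton] at hte
      rcases hte with rfl | rfl
      · exact mem_union_left _ (mem_filter.2 ⟨hB, htB⟩)
      · exact mem_union_right _ (mem_filter.2 ⟨hB, htB⟩)
    have := (card_le_card hsub).trans (card_union_le _ _)
    have hdy := hdeg y
    have : 0 < #{e ∈ L | y ∈ e} := card_pos.2 ⟨_, mem_filter.2 ⟨he, by simp⟩⟩
    omega

lemma subset_biUnion_of_forall_exists_not_mem_not_mem (hM : ∀ B ∈ M, #B = 3)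
    (hcov : ∀ B ∈ M, ∀ e ∈ L, ¬Disjoint B e) (hno2 : ∀ u v, ∃ e ∈ L, u ∉ e ∧ v ∉ e)
    {B : Finset α} (hB : B ∈ M) : B ⊆ L.biUnion id := by
  intro x hx
  obtain ⟨y, z, -, hyz⟩ := card_eq_two.1 (by rw [card_erase_of_mem hx, hM B hB] : #(B.erase x) = 2)
  obtain ⟨e, he, hye, hze⟩ := hno2 y z
  obtain ⟨t, htB, hte⟩ := not_disjoint_iff.1 (hcov B hB e he)
  have htx : t = x := by
    by_contra h
    have ht : t ∈ B.erase x := mem_erase.2 ⟨h, htB⟩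
    rw [hyz] at ht
    simp only [mem_insert, mem_singleton] at ht
    rcases ht with rfl | rfl <;> contradiction
  exact mem_biUnion.2 ⟨e, he, htx ▸ hte⟩

lemma card_filter_mem_mem_le_two (hL : ∀ e ∈ L, #e = 2) (hM : ∀ B ∈ M, #B = 3)
    (hcov : ∀ B ∈ M, ∀ e ∈ L, ¬Disjoint B e) {e : Finset α} (he : e ∈ L) {u w : α}
    (huw : u ≠ w) (hu : u ∉ e) (hw : w ∉ e) : #{B ∈ M | u ∈ B ∧ w ∈ B} ≤ 2 :=
  calc #{B ∈ M | u ∈ B ∧ w ∈ B} ≤ #(e.image fun g => ({u, w, g} : Finset α)) :=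
        card_le_card fun B hB => by
          obtain ⟨hBM, huB, hwB⟩ := mem_filter.1 hB
          obtain ⟨g, hgB, hge⟩ := not_disjoint_iff.1 (hcov B hBM e he)
          refine mem_image.2 ⟨g, hge, (eq_triple_of_mem (hM B hBM).le huB hwB hgB huw ?_ ?_).symm⟩
          · rintro rfl; exact hu hge
          · rintro rfl; exact hw hge
    _ ≤ #e := card_image_le
    _ = 2 := hL e he

lemma card_le_eight_of_disjoint (hL : ∀ e ∈ L, #e = 2) (hM : ∀ B ∈ M, #B = 3)
    (hcov : ∀ B ∈ M, ∀ e ∈ L, ¬Disjoint B e) (hno2 : ∀ u v, ∃ e ∈ L, u ∉ e ∧ v ∉ e)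
    {e₁ e₂ : Finset α} (he₁ : e₁ ∈ L) (he₂ : e₂ ∈ L) (hd : Disjoint e₁ e₂) : #M ≤ 8 :=
  calc #M ≤ #((e₁ ×ˢ e₂).biUnion fun xy => {B ∈ M | xy.1 ∈ B ∧ xy.2 ∈ B}) :=
        card_le_card fun B hB => by
          obtain ⟨x, hxB, hx⟩ := not_disjoint_iff.1 (hcov B hB e₁ he₁)
          obtain ⟨y, hyB, hy⟩ := not_disjoint_iff.1 (hcov B hB e₂ he₂)
          exact mem_biUnion.2 ⟨(x, y), mem_product.2 ⟨hx, hy⟩, mem_filter.2 ⟨hB, hxB, hyB⟩⟩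
    _ ≤ #(e₁ ×ˢ e₂) * 2 := card_biUnion_le_card_mul _ _ _ fun xy hxy => by
        obtain ⟨e, he, hxe, hye⟩ := hno2 xy.1 xy.2
        exact card_filter_mem_mem_le_two hL hM hcov he
          (fun h => disjoint_left.1 hd (mem_product.1 hxy).1 (h ▸ (mem_product.1 hxy).2)) hxe hye
    _ = 8 := by rw [card_product, hL e₁ he₁, hL e₂ he₂]

lemma sum_card_filter_mem (W : Finset α) (S : Finset (Finset α)) :
    ∑ x ∈ W, #{B ∈ S | x ∈ B} = ∑ B ∈ S, #(W ∩ B) := by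
  simp_rw [← filter_mem_eq_inter, card_eq_sum_ones, sum_filter]
  exact sum_comm

lemma card_le_five_of_card_eq_five (hL : ∀ e ∈ L, #e = 2) (hM : ∀ B ∈ M, #B = 3)
    (hcov : ∀ B ∈ M, ∀ e ∈ L, ¬Disjoint B e)
    (hdeg : ∀ x, #{B ∈ M | x ∈ B} + #{e ∈ L | x ∈ e} ≤ #L) {W : Finset α}
    (hMW : ∀ B ∈ M, B ⊆ W) (hLW : ∀ e ∈ L, e ⊆ W) (hW : #W = 5) : #M ≤ 5 := by
  -- counting incidences inside `W` gives `3 #M + 2 #L ≤ 5 #L`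
  have hsum : ∑ x ∈ W, (#{B ∈ M | x ∈ B} + #{e ∈ L | x ∈ e}) ≤ #W * #L :=
    sum_le_card_nsmul _ _ _ fun x _ => hdeg x
  have hMsum : ∑ x ∈ W, #{B ∈ M | x ∈ B} = #M * 3 := by
    rw [sum_card_filter_mem, sum_congr rfl fun B hB => by rw [inter_eq_right.2 (hMW B hB), hM B hB]]
    simp
  have hLsum : ∑ x ∈ W, #{e ∈ L | x ∈ e} = #L * 2 := by
    rw [sum_card_filter_mem, sum_congr rfl fun e he => by rw [inter_eq_right.2 (hLW e he), hL e he]]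
    simp
  rw [sum_add_distrib, hMsum, hLsum] at hsum
  -- the complements in `W` of members of `M` are non-edges
  have hcompl : #(M.image (W \ ·)) + #L ≤ #(powersetCard 2 W) := by
    rw [← card_union_of_disjoint]
    · refine card_le_card (union_subset (fun S hS => ?_) fun e he => ?_)
      · obtain ⟨B, hB, rfl⟩ := mem_image.1 hS
        rw [mem_powersetCard, card_sdiff_of_subset (hMW B hB), hM B hB, hW]
        exact ⟨sdiff_subset, rfl⟩
      · exact mem_powersetCard.2 ⟨hLW e he, hL e he⟩
    · refine disjoint_left.2 fun S hS hSL => ?_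
      obtain ⟨B, hB, rfl⟩ := mem_image.1 hS
      exact hcov B hB _ hSL (disjoint_sdiff_self_right)
  rw [card_image_of_injOn fun B hB B' hB' h => by
      rw [← Finset.sdiff_sdiff_eq_self (hMW B hB), ← Finset.sdiff_sdiff_eq_self (hMW B' hB'), h],
    card_powersetCard, hW] at hcompl
  rw [hW] at hsum
  have : Nat.choose 5 2 = 10 := rfl
  omega

lemma card_le_seven_of_pairwise_disjoint (hL : ∀ e ∈ L, #e = 2) (hM : ∀ B ∈ M, #B = 3)
    (hcov : ∀ B ∈ M, ∀ e ∈ L, ¬Disjoint B e) (hMint : (M : Set (Finset α)).Intersecting)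
    {e₁ e₂ e₃ : Finset α} (he₁ : e₁ ∈ L) (he₂ : e₂ ∈ L) (he₃ : e₃ ∈ L) (h₁₂ : Disjoint e₁ e₂)
    (h₁₃ : Disjoint e₁ e₃) (h₂₃ : Disjoint e₂ e₃) : #M ≤ 7 := by
  set T := (e₁ ×ˢ e₂ ×ˢ e₃).image fun x => ({x.1, x.2.1, x.2.2} : Finset α)
  have hMT : M ⊆ T := fun B hB => by
    obtain ⟨x, hxB, hx⟩ := not_disjoint_iff.1 (hcov B hB e₁ he₁)
    obtain ⟨y, hyB, hy⟩ := not_disjoint_iff.1 (hcov B hB e₂ he₂)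
    obtain ⟨z, hzB, hz⟩ := not_disjoint_iff.1 (hcov B hB e₃ he₃)
    refine mem_image.2 ⟨(x, y, z), by simp [hx, hy, hz], (eq_triple_of_mem (hM B hB).le hxB hyB hzB
      ?_ ?_ ?_).symm⟩ <;> rintro rfl
    exacts [disjoint_left.1 h₁₂ hx hy, disjoint_left.1 h₁₃ hx hz, disjoint_left.1 h₂₃ hy hz]
  have hT : #T ≤ 8 := card_image_le.trans (by simp [hL e₁ he₁, hL e₂ he₂, hL e₃ he₃])
  -- two complementary transversals cannot both lie in the intersecting family `M`
  obtain ⟨p, q, -, rfl⟩ := card_eq_two.1 (hL e₁ he₁)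
  obtain ⟨r, s, -, rfl⟩ := card_eq_two.1 (hL e₂ he₂)
  obtain ⟨t, t', -, rfl⟩ := card_eq_two.1 (hL e₃ he₃)
  have hX : {p, r, t} ∈ T := mem_image.2 ⟨(p, r, t), by simp, rfl⟩
  have hY : {q, s, t'} ∈ T := mem_image.2 ⟨(q, s, t'), by simp, rfl⟩
  have hXY : Disjoint ({p, r, t} : Finset α) {q, s, t'} := by
    simp only [disjoint_left, mem_insert, mem_singleton] at h₁₂ h₁₃ h₂₃ ⊢
    grind
  obtain ⟨Y, hY, hMY⟩ : ∃ Y ∈ T, M ⊆ T.erase Y := by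
    by_cases hXM : {p, r, t} ∈ M
    · exact ⟨_, hY, fun B hB => mem_erase.2 ⟨by rintro rfl; exact hMint hXM hB hXY, hMT hB⟩⟩
    · exact ⟨_, hX, fun B hB => mem_erase.2 ⟨by rintro rfl; exact hXM hB, hMT hB⟩⟩
  have := card_le_card hMY
  rw [card_erase_of_mem hY] at this
  omega

lemma card_filter_mem_le_two_of_not_mem (hL : ∀ e ∈ L, #e = 2) (hM : ∀ B ∈ M, #B = 3)
    (hcov : ∀ B ∈ M, ∀ e ∈ L, ¬Disjoint B e) (hno2 : ∀ u v, ∃ e ∈ L, u ∉ e ∧ v ∉ e)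
    {e₁ e₂ : Finset α} (he₁ : e₁ ∈ L) (he₂ : e₂ ∈ L) (hd : Disjoint e₁ e₂) {z z' ζ : α}
    (hz : z ∉ e₁ ∪ e₂) (hz' : z' ∉ e₁ ∪ e₂) (hzz' : z ≠ z') (hζ : ζ ∈ e₁ ∪ e₂)
    (hζB : ∀ B ∈ M, z' ∉ B → ζ ∈ B) : #{B ∈ M | z ∈ B} ≤ 2 := by
  obtain ⟨e, he, hze, hζe⟩ := hno2 z ζ
  refine (card_le_card fun B hB => ?_).trans
    (card_filter_mem_mem_le_two hL hM hcov he (by rintro rfl; exact hz hζ) hze hζe)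
  obtain ⟨hBM, hzB⟩ := mem_filter.1 hB
  obtain ⟨x, hxB, hx⟩ := not_disjoint_iff.1 (hcov B hBM e₁ he₁)
  obtain ⟨y, hyB, hy⟩ := not_disjoint_iff.1 (hcov B hBM e₂ he₂)
  have hB := eq_triple_of_mem (hM B hBM).le hxB hyB hzB (fun h => disjoint_left.1 hd hx (h ▸ hy))
    (by rintro rfl; exact hz (mem_union_left _ hx)) (by rintro rfl; exact hz (mem_union_right _ hy))
  refine mem_filter.2 ⟨hBM, hzB, hζB B hBM fun hz'B => ?_⟩
  rw [hB] at hz'B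
  simp only [mem_insert, mem_singleton] at hz'B
  rcases hz'B with rfl | rfl | rfl
  · exact hz' (mem_union_left _ hx)
  · exact hz' (mem_union_right _ hy)
  · exact hzz' rfl

lemma card_le_seven_of_sdiff_eq_pair (hL : ∀ e ∈ L, #e = 2) (hM : ∀ B ∈ M, #B = 3)
    (hcov : ∀ B ∈ M, ∀ e ∈ L, ¬Disjoint B e) (hno2 : ∀ u v, ∃ e ∈ L, u ∉ e ∧ v ∉ e)
    {e₁ e₂ : Finset α} (he₁ : e₁ ∈ L) (he₂ : e₂ ∈ L) (hd : Disjoint e₁ e₂)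
    (hmeet : ∀ e ∈ L, ¬Disjoint e (e₁ ∪ e₂)) {z₁ z₂ : α} (hz : z₁ ≠ z₂)
    (hZ : L.biUnion id \ (e₁ ∪ e₂) = {z₁, z₂}) : #M ≤ 7 := by
  have hz₁ := mem_sdiff.1 (hZ ▸ by simp : z₁ ∈ L.biUnion id \ (e₁ ∪ e₂))
  have hz₂ := mem_sdiff.1 (hZ ▸ by simp : z₂ ∈ L.biUnion id \ (e₁ ∪ e₂))
  have hnbr : ∀ z ∈ L.biUnion id, z ∉ e₁ ∪ e₂ → ∃ ζ ∈ e₁ ∪ e₂, ∀ B ∈ M, z ∉ B → ζ ∈ B := by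
    intro z hzW hzV
    obtain ⟨e, he, hze⟩ := mem_biUnion.1 hzW
    obtain ⟨ζ, hζe, hζV⟩ := not_disjoint_iff.1 (hmeet e he)
    refine ⟨ζ, hζV, fun B hB hzB => neighbors_subset hL hcov hB hzB
      (mem_neighbors.2 ⟨e, he, hze, ?_, hζe⟩)⟩
    rintro rfl
    exact hzV hζV
  obtain ⟨ζ₁, hζ₁V, hζ₁⟩ := hnbr z₁ hz₁.1 hz₁.2
  obtain ⟨ζ₂, hζ₂V, hζ₂⟩ := hnbr z₂ hz₂.1 hz₂.2
  have h₁ := card_filter_mem_le_two_of_not_mem hL hM hcov hno2 he₁ he₂ hd hz₁.2 hz₂.2 hz hζ₂V hζ₂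
  have h₂ := card_filter_mem_le_two_of_not_mem hL hM hcov hno2 he₁ he₂ hd hz₂.2 hz₁.2 hz.symm
    hζ₁V hζ₁
  -- the members avoiding both `zᵢ` are 3-subsets of `e₁ ∪ e₂` through `ζ₁`
  have hV : #(e₁ ∪ e₂) = 4 := by rw [card_union_of_disjoint hd, hL e₁ he₁, hL e₂ he₂]
  have hmem : (e₁ ∪ e₂).erase ζ₁ ∈ powersetCard 3 (e₁ ∪ e₂) :=
    mem_powersetCard.2 ⟨erase_subset _ _, by rw [card_erase_of_mem hζ₁V, hV]⟩
  have h₀ : #{B ∈ M | z₁ ∉ B ∧ z₂ ∉ B} ≤ #((powersetCard 3 (e₁ ∪ e₂)).erase ((e₁ ∪ e₂).erase ζ₁)) :=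
    card_le_card fun B hB => by
      obtain ⟨hBM, hz₁B, hz₂B⟩ := mem_filter.1 hB
      refine mem_erase.2 ⟨fun h => by simpa [h] using hζ₁ B hBM hz₁B,
        mem_powersetCard.2 ⟨fun w hw => ?_, hM B hBM⟩⟩
      by_contra hwV
      have := mem_sdiff.2 ⟨subset_biUnion_of_forall_exists_not_mem_not_mem hM hcov hno2 hBM hw, hwV⟩
      rw [hZ, mem_insert, mem_singleton] at this
      rcases this with rfl | rfl <;> contradiction
  rw [card_erase_of_mem hmem, card_powersetCard, hV] at h₀
  have : Nat.choose 4 3 = 4 := rfl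
  have hsplit : M ⊆ {B ∈ M | z₁ ∈ B} ∪ {B ∈ M | z₂ ∈ B} ∪ {B ∈ M | z₁ ∉ B ∧ z₂ ∉ B} :=
    fun B hB => by simp only [mem_union, mem_filter]; tauto
  have := (card_le_card hsplit).trans ((card_union_le _ _).trans
    (Nat.add_le_add_right (card_union_le _ _) _))
  omega

lemma card_le_of_forall_exists_not_mem_not_mem (hL : ∀ e ∈ L, #e = 2)
    (hM : ∀ B ∈ M, #B = 3) (hLne : L.Nonempty) (hcov : ∀ B ∈ M, ∀ e ∈ L, ¬Disjoint B e)
    (hdeg : ∀ x, #{B ∈ M | x ∈ B} + #{e ∈ L | x ∈ e} ≤ #L)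
    (hMint : (M : Set (Finset α)).Intersecting) (hno2 : ∀ u v, ∃ e ∈ L, u ∉ e ∧ v ∉ e) :
    #M ≤ #(L.biUnion id) + 1 := by
  have hsub : ∀ {e}, e ∈ L → e ⊆ L.biUnion id := fun he => subset_biUnion_of_mem id he
  have hMW : ∀ B ∈ M, B ⊆ L.biUnion id := fun B hB =>
    subset_biUnion_of_forall_exists_not_mem_not_mem hM hcov hno2 hB
  obtain ⟨e₁, he₁⟩ := hLne
  obtain ⟨p, q, -, he₁p⟩ := card_eq_two.1 (hL e₁ he₁)
  obtain ⟨e₂, he₂, hp, hq⟩ := hno2 p q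
  have hd : Disjoint e₁ e₂ := by simp [he₁p, hp, hq]
  have hV : #(e₁ ∪ e₂) = 4 := by rw [card_union_of_disjoint hd, hL e₁ he₁, hL e₂ he₂]
  by_cases h3 : ∃ e₃ ∈ L, Disjoint e₃ (e₁ ∪ e₂)
  · obtain ⟨e₃, he₃, hd₃⟩ := h3
    rw [disjoint_union_right] at hd₃
    have h7 := card_le_seven_of_pairwise_disjoint hL hM hcov hMint he₁ he₂ he₃ hd hd₃.1.symm
      hd₃.2.symm
    have h6 : #(e₁ ∪ e₂ ∪ e₃) ≤ #(L.biUnion id) :=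
      card_le_card (union_subset (union_subset (hsub he₁) (hsub he₂)) (hsub he₃))
    rw [card_union_of_disjoint (disjoint_union_left.2 ⟨hd₃.1.symm, hd₃.2.symm⟩), hV,
      hL e₃ he₃] at h6
    omega
  push Not at h3
  have hW := card_sdiff_add_card_eq_card (union_subset (hsub he₁) (hsub he₂))
  rw [hV] at hW
  rcases Nat.lt_or_ge 2 #(L.biUnion id \ (e₁ ∪ e₂)) with hZ | hZ
  · have := card_le_eight_of_disjoint hL hM hcov hno2 he₁ he₂ hd
    omega
  interval_cases hZc : #(L.biUnion id \ (e₁ ∪ e₂))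
  · have := card_le_card fun B hB => mem_powersetCard.2 ⟨hMW B hB, hM B hB⟩
    rw [card_powersetCard, ← hW, zero_add] at this
    have : Nat.choose 4 3 = 4 := rfl
    omega
  · have := card_le_five_of_card_eq_five hL hM hcov hdeg hMW (fun e he => hsub he) (by omega)
    omega
  · obtain ⟨z₁, z₂, hz, hZ⟩ := card_eq_two.1 hZc
    have := card_le_seven_of_sdiff_eq_pair hL hM hcov hno2 he₁ he₂ hd h3 hz hZ
    omega

/-- Used for the link `L` of a vertex `a` of maximum degree and the members `M` avoiding `a`;
`hdeg` says that no vertex has larger degree than `a`. -/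
theorem card_le_card_biUnion_add_one (hL : ∀ e ∈ L, #e = 2)
    (hM : ∀ B ∈ M, #B = 3) (hLne : L.Nonempty) (hcov : ∀ B ∈ M, ∀ e ∈ L, ¬Disjoint B e)
    (hdeg : ∀ x, #{B ∈ M | x ∈ B} + #{e ∈ L | x ∈ e} ≤ #L)
    (hMint : (M : Set (Finset α)).Intersecting)
    (hno2 : ∀ u v, (∃ B ∈ M, u ∉ B ∧ v ∉ B) ∨ ∃ e ∈ L, u ∉ e ∧ v ∉ e) :
    #M ≤ #(L.biUnion id) + 1 := by
  by_cases h1 : ∃ u, ∀ e ∈ L, u ∈ e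
  · obtain ⟨u, hu⟩ := h1
    exact (card_le_of_forall_mem hL hcov hdeg hLne hu).trans (Nat.le_succ _)
  push Not at h1
  by_cases h2 : ∃ u v, ∀ e ∈ L, u ∈ e ∨ v ∈ e
  · obtain ⟨u, v, huv⟩ := h2
    obtain ⟨B₀, hB₀, hu, hv⟩ := (hno2 u v).resolve_right fun ⟨e, he, hue, hve⟩ =>
      (huv e he).elim hue hve
    exact card_le_of_forall_mem_or_mem hL hM hcov hdeg h1 huv hB₀ hu hv
  push Not at h2
  exact card_le_of_forall_exists_not_mem_not_mem hL hM hLne hcov hdeg hMint h2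

end Link

def link (F : Finset (Finset α)) (a : α) : Finset (Finset α) :=
  {B ∈ F | a ∈ B}.image (·.erase a)

lemma mem_link {a : α} {e : Finset α} : e ∈ link F a ↔ ∃ B ∈ F, a ∈ B ∧ B.erase a = e := by
  simp [link, and_assoc]

lemma card_link (a : α) : #(link F a) = #{B ∈ F | a ∈ B} :=
  card_image_of_injOn (erase_injOn fun _ hB => (mem_filter.1 hB).2)

lemma card_filter_add_card_filter_link_le {a : α}
    (hmax : ∀ x, #{B ∈ F | x ∈ B} ≤ #{B ∈ F | a ∈ B}) (x : α) :
    #{B ∈ {B ∈ F | a ∉ B} | x ∈ B} + #{e ∈ link F a | x ∈ e} ≤ #(link F a) := by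
  by_cases hxa : x = a
  · subst hxa
    rw [filter_false_of_mem fun B hB => (mem_filter.1 hB).2,
      filter_false_of_mem fun e he => by obtain ⟨B, -, -, rfl⟩ := mem_link.1 he; simp]
    simp
  have hLx : #{e ∈ link F a | x ∈ e} ≤ #{B ∈ F | a ∈ B ∧ x ∈ B} := by
    refine (card_le_card fun e he => ?_).trans (card_image_le (f := (·.erase a)))
    obtain ⟨heL, hxe⟩ := mem_filter.1 he
    obtain ⟨B, hBF, haB, rfl⟩ := mem_link.1 heL
    exact mem_image_of_mem _ (mem_filter.2 ⟨hBF, haB, mem_of_mem_erase hxe⟩)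
  have hdisj : Disjoint {B ∈ {B ∈ F | a ∉ B} | x ∈ B} {B ∈ F | a ∈ B ∧ x ∈ B} :=
    disjoint_left.2 fun B hB hB' => (mem_filter.1 (mem_filter.1 hB).1).2 (mem_filter.1 hB').2.1
  have hunion : {B ∈ {B ∈ F | a ∉ B} | x ∈ B} ∪ {B ∈ F | a ∈ B ∧ x ∈ B} ⊆ {B ∈ F | x ∈ B} := by
    intro B hB
    simp only [mem_union, mem_filter] at hB ⊢
    tauto
  have := card_le_card hunion
  rw [card_union_of_disjoint hdisj] at this
  have := hmax x
  rw [card_link]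
  omega

theorem starDominates_of_forall_card_le (hF : (F : Set (Finset α)).Intersecting)
    (h3 : ∀ B ∈ F, #B = 3) (hno2 : ∀ u v, ∃ B ∈ F, u ∉ B ∧ v ∉ B) {a : α}
    (ha : ∃ B ∈ F, a ∈ B) (hmax : ∀ x, #{B ∈ F | x ∈ B} ≤ #{B ∈ F | a ∈ B}) :
    StarDominates F a := by
  have hsub : (link F a).biUnion id ⊆ newNeighbors F a := by
    simp only [biUnion_subset]
    intro e he u hu
    obtain ⟨B, hBF, haB, rfl⟩ := mem_link.1 he
    obtain ⟨hua, huB⟩ := mem_erase.1 hu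
    refine mem_newNeighbors.2 ⟨⟨B, hBF, haB, huB⟩, hua, fun h => ?_⟩
    have := h3 _ h
    rw [card_pair hua.symm] at this
    omega
  obtain ⟨B₀, hB₀, haB₀⟩ := ha
  refine ⟨⟨B₀, hB₀, haB₀⟩, (card_le_card_biUnion_add_one (L := link F a) ?_
    (fun B hB => h3 B (mem_filter.1 hB).1) ⟨_, mem_link.2 ⟨B₀, hB₀, haB₀, rfl⟩⟩ ?_
    (card_filter_add_card_filter_link_le hmax)
    (fun A hA B hB => hF (mem_filter.1 hA).1 (mem_filter.1 hB).1) ?_).trans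
    (Nat.add_le_add_right (card_le_card hsub) 1)⟩
  · intro e he
    obtain ⟨B, hBF, haB, rfl⟩ := mem_link.1 he
    rw [card_erase_of_mem haB, h3 B hBF]
  · intro B hB e he
    obtain ⟨A, hAF, haA, rfl⟩ := mem_link.1 he
    obtain ⟨w, hwB, hwA⟩ := not_disjoint_iff.1 (hF (mem_filter.1 hB).1 hAF)
    refine not_disjoint_iff.2 ⟨w, hwB, mem_erase.2 ⟨?_, hwA⟩⟩
    rintro rfl
    exact (mem_filter.1 hB).2 hwB
  · intro u v
    obtain ⟨B, hBF, huB, hvB⟩ := hno2 u v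
    by_cases haB : a ∈ B
    · exact Or.inr ⟨_, mem_link.2 ⟨B, hBF, haB, rfl⟩,
        fun h => huB (mem_of_mem_erase h), fun h => hvB (mem_of_mem_erase h)⟩
    · exact Or.inl ⟨B, mem_filter.2 ⟨hBF, haB⟩, huB, hvB⟩

theorem exists_starDominates_of_card_eq_three (hF : (F : Set (Finset α)).Intersecting)
    (h3 : ∀ B ∈ F, #B = 3) (hm2 : ∀ a, 2 ≤ #{B ∈ F | a ∉ B}) {B₀ : Finset α} (hB₀ : B₀ ∈ F) :
    ∃ a, StarDominates F a := by
  by_cases hcov : ∃ x y, x ≠ y ∧ ∀ B ∈ F, x ∈ B ∨ y ∈ B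
  · obtain ⟨x, y, -, hcov⟩ := hcov
    have h23 : ∀ B ∈ F, #B = 2 ∨ #B = 3 := fun B hB => Or.inr (h3 B hB)
    rcases le_total #{B ∈ F | x ∉ B} #{B ∈ F | y ∉ B} with h | h
    · exact ⟨x, starDominates_of_cover hF h23 hcov (fun e he h2 => absurd (h3 e he) (by omega))
        (exists_not_mem_of_two_le (hm2 y)) h⟩
    · exact ⟨y, starDominates_of_cover hF h23 (fun B hB => (hcov B hB).symm)
        (fun e he h2 => absurd (h3 e he) (by omega)) (exists_not_mem_of_two_le (hm2 x)) h⟩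
  push Not at hcov
  have hno2 : ∀ u v, ∃ B ∈ F, u ∉ B ∧ v ∉ B := fun u v => by
    by_cases huv : u = v
    · obtain ⟨B, hB, huB⟩ := exists_not_mem_of_two_le (hm2 u)
      exact ⟨B, hB, huB, huv ▸ huB⟩
    · exact hcov u v huv
  obtain ⟨v, hv⟩ : B₀.Nonempty := card_pos.1 (by rw [h3 B₀ hB₀]; omega)
  obtain ⟨a, haV, hmax⟩ := exists_max_image (F.biUnion id) (fun x => #{B ∈ F | x ∈ B})
    ⟨v, mem_biUnion.2 ⟨B₀, hB₀, hv⟩⟩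
  refine ⟨a, starDominates_of_forall_card_le hF h3 hno2 (by simpa using haV) fun x => ?_⟩
  by_cases hx : x ∈ F.biUnion id
  · exact hmax x hx
  · rw [filter_false_of_mem (p := (x ∈ ·)) fun B hB hxB => hx (mem_biUnion.2 ⟨B, hB, hxB⟩)]
    simp

lemma card_eq_two_or_three (hF : (F : Set (Finset α)).Intersecting) (h3 : ∀ B ∈ F, #B ≤ 3)
    (hm2 : ∀ a, 2 ≤ #{B ∈ F | a ∉ B}) {B : Finset α} (hB : B ∈ F) : #B = 2 ∨ #B = 3 := by
  have h0 : 0 < #B := card_pos.2 (nonempty_iff_ne_empty.2 fun h => hF hB hB (by simp [h]))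
  have h1 : #B ≠ 1 := fun h => by
    obtain ⟨u, rfl⟩ := card_eq_one.1 h
    have := hm2 u
    have hu : ∀ A ∈ F, ¬u ∉ A := fun A hA huA =>
      huA (mem_of_pair_mem hF (x := u) (by rwa [pair_eq_singleton]) hA huA)
    rw [filter_false_of_mem hu] at this
    simp at this
  have := h3 B hB
  omega

theorem exists_starDominates (hF : (F : Set (Finset α)).Intersecting) (h3 : ∀ B ∈ F, #B ≤ 3)
    (hne : F.Nonempty) : ∃ a, StarDominates F a := by
  by_cases h1 : ∃ a, (∃ B ∈ F, a ∈ B) ∧ #{B ∈ F | a ∉ B} ≤ 1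
  · obtain ⟨a, ha, h⟩ := h1
    exact ⟨a, ha, by omega⟩
  push Not at h1
  obtain ⟨B₀, hB₀⟩ := hne
  obtain ⟨v, hv⟩ : B₀.Nonempty := nonempty_iff_ne_empty.2 fun h => hF hB₀ hB₀ (by simp [h])
  have hm2 : ∀ a, 2 ≤ #{B ∈ F | a ∉ B} := fun a => by
    by_cases ha : ∃ B ∈ F, a ∈ B
    · exact h1 a ha
    · push Not at ha
      rw [filter_true_of_mem ha]
      exact (h1 v ⟨B₀, hB₀, hv⟩).trans_le (card_le_card (filter_subset _ _))
  have h23 := fun B (hB : B ∈ F) => card_eq_two_or_three hF h3 hm2 hB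
  by_cases hpair : ∃ e ∈ F, #e = 2
  · obtain ⟨e, he, he2⟩ := hpair
    obtain ⟨x, y, hxy, rfl⟩ := card_eq_two.1 he2
    exact exists_starDominates_of_pair_mem hF h23 hm2 hxy he
  · push Not at hpair
    exact exists_starDominates_of_card_eq_three hF
      (fun B hB => (h23 B hB).resolve_left (hpair B hB)) hm2 hB₀

end Sterboul

/-- Sterboul: Chvátal's conjecture for rank at most 3. -/
theorem stmt_3 {α : Type*} [DecidableEq α] (F : Finset (Finset α))
    (hne : F.Nonempty)
    (hF : ∀ A ∈ F, ∀ B ∈ F, (A ∩ B).Nonempty)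
    (h3 : ∀ B ∈ F, B.card ≤ 3) :
    let C : Finset (Finset α) := F.biUnion Finset.powerset
    ∃ a : α, {a} ∈ C ∧ F.card ≤ (C.filter (fun B => a ∈ B)).card := by
  have hF' : (F : Set (Finset α)).Intersecting := fun A hA B hB =>
    not_disjoint_iff_nonempty_inter.2 (hF A hA B hB)
  obtain ⟨a, ha⟩ := Sterboul.exists_starDominates hF' h3 hne
  obtain ⟨B, hB, haB⟩ := ha.1
  exact ⟨a, mem_biUnion.2 ⟨B, hB, by simpa using haB⟩, ha.card_le_card_filter_mem hF'⟩
end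

section
/- Let F be an intersecting family consisting only of 3-element sets, and suppose some triangle {a,b,c} ∈ F has at most one dangling triangle at the vertex c (i.e., at most one τ ∈ F with τ ∩ {a,b,c} = {c}). Then there exists an intersecting family F' with |F'| ≥ |F| that contains a set of size at most 2. -/
/-- If a triangle `{a,b,c}` of an intersecting family of triangles has at most one
triangle dangling at `c`, there is an intersecting family at least as large containing
a set of size at most 2. -/
theorem stmt_4 {α : Type*} [DecidableEq α] (F : Finset (Finset α))
    (hF : ∀ A ∈ F, ∀ B ∈ F, (A ∩ B).Nonempty)
    (h3 : ∀ B ∈ F, B.card = 3)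
    (a b c : α) (habc : ({a, b, c} : Finset α) ∈ F)
    (hd : (F.filter (fun τ => τ ∩ ({a, b, c} : Finset α) = {c})).card ≤ 1) :
    ∃ F' : Finset (Finset α),
      (∀ A ∈ F', ∀ B ∈ F', (A ∩ B).Nonempty) ∧
      F.card ≤ F'.card ∧ ∃ B ∈ F', B.card ≤ 2 := by
  -- key: any member not dangling at c meets {a,b}
  have key : ∀ A ∈ F, A ∩ ({a, b, c} : Finset α) ≠ {c} →
      (({a, b} : Finset α) ∩ A).Nonempty := by
    intro A hA hne
    have h1 : (A ∩ ({a, b, c} : Finset α)).Nonempty := hF A hA _ habc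
    by_contra h
    apply hne
    have hsub : A ∩ ({a, b, c} : Finset α) ⊆ {c} := by
      intro x hx
      simp only [Finset.mem_inter, Finset.mem_insert, Finset.mem_singleton] at hx
      rcases hx.2 with rfl | rfl | rfl
      · exact absurd ⟨x, by simp [hx.1]⟩ h
      · exact absurd ⟨x, by simp [hx.1]⟩ h
      · simp
    rcases Finset.subset_singleton_iff.mp hsub with he | he
    · exact absurd h1 (by simp [he])
    · exact he
  have hab_card : ({a, b} : Finset α).card ≤ 2 := Finset.card_insert_le _ _ |>.trans (by simp)
  have hab_notmem : ∀ S : Finset (Finset α), S ⊆ F → ({a, b} : Finset α) ∉ S := by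
    intro S hS hmem
    have := h3 _ (hS hmem)
    omega
  rcases Finset.eq_empty_or_nonempty (F.filter (fun τ => τ ∩ ({a, b, c} : Finset α) = {c}))
    with hemp | ⟨τ, hτ⟩
  · -- no dangling triangle: add {a,b}
    refine ⟨insert {a, b} F, ?_, ?_, ⟨{a, b}, by simp, hab_card⟩⟩
    · intro A hA B hB
      simp only [Finset.mem_insert] at hA hB
      rcases hA with rfl | hA <;> rcases hB with rfl | hB
      · exact ⟨a, by simp⟩
      · exact key B hB (fun hc => by
          have : B ∈ F.filter (fun τ => τ ∩ ({a, b, c} : Finset α) = {c}) := by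
            simp [hB, hc]
          simp [hemp] at this)
      · rw [Finset.inter_comm]
        exact key A hA (fun hc => by
          have : A ∈ F.filter (fun τ => τ ∩ ({a, b, c} : Finset α) = {c}) := by
            simp [hA, hc]
          simp [hemp] at this)
      · exact hF A hA B hB
    · exact Finset.card_le_card (Finset.subset_insert _ _)
  · -- unique dangling triangle τ: erase it, add {a,b}
    simp only [Finset.mem_filter] at hτ
    obtain ⟨hτF, hτc⟩ := hτ
    have huniq : ∀ A ∈ F, A ∩ ({a, b, c} : Finset α) = {c} → A = τ := by
      intro A hA hAc
      have h1 : A ∈ F.filter (fun τ => τ ∩ ({a, b, c} : Finset α) = {c}) := by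
        simp [hA, hAc]
      have h2 : τ ∈ F.filter (fun τ => τ ∩ ({a, b, c} : Finset α) = {c}) := by
        simp [hτF, hτc]
      exact Finset.card_le_one.mp hd _ h1 _ h2
    refine ⟨insert {a, b} (F.erase τ), ?_, ?_, ⟨{a, b}, by simp, hab_card⟩⟩
    · intro A hA B hB
      simp only [Finset.mem_insert, Finset.mem_erase] at hA hB
      rcases hA with rfl | ⟨hAτ, hA⟩ <;> rcases hB with rfl | ⟨hBτ, hB⟩
      · exact ⟨a, by simp⟩
      · exact key B hB (fun hc => hBτ (huniq B hB hc))
      · rw [Finset.inter_comm]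
        exact key A hA (fun hc => hAτ (huniq A hA hc))
      · exact hF A hA B hB
    · rw [Finset.card_insert_of_notMem
        (hab_notmem _ (Finset.erase_subset _ _)), Finset.card_erase_of_mem hτF]
      have : 1 ≤ F.card := Finset.card_pos.mpr ⟨τ, hτF⟩
      omega
end

section
/- Let F be a nonempty intersecting family consisting only of 3-element sets, and let C be the downset generated by F. If there exist two vertices c, v of C such that {c,v} ∉ C (the graph of C is not complete), then there exists an intersecting family F' ⊆ C with |F'| ≥ |F| that contains a set of size at most 2. -/
/-!
If any two members of `F` through `v` meet outside `v`, deleting `v` from every member keeps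
`F` intersecting, of the same size, and produces 2-sets; likewise for `c`. Otherwise there are
members `A, A'` meeting only in `c` and `B, B'` meeting only in `v`, and since no member contains
both `c` and `v` they form a cycle `A = cab, A' = ca'b', B = vaa', B' = vbb'`. A member avoiding
`a` is `A'`, `B'`, or contains `b, a'`. If all of the latter meet `{c, v, b'}`, at most five
members avoid `a`, and the star of `a` in the downset, which gains `{a}` and the four pairs
`ac, ab, av, aa'`, is large enough. Otherwise some member `q ⊇ {b, a'}` misses `a, c, v, b'`;
every member through `a, b'` but not `b` must meet `q`, and the symmetric count makes the star
of `b` large enough.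
-/

open Finset

section

variable {α : Type*} [DecidableEq α]

lemma ne_of_card_eq_three {x y z : α} (h : ({x, y, z} : Finset α).card = 3) :
    x ≠ y ∧ x ≠ z ∧ y ≠ z := by
  refine ⟨?_, ?_, ?_⟩ <;> rintro rfl <;>
    simp only [mem_insert, mem_singleton, true_or, or_true, insert_eq_of_mem] at h <;>
    exact absurd h (card_le_two.trans_lt (by norm_num)).ne

lemma injOn_erase_of_forall_card_eq {F : Finset (Finset α)} {k : ℕ}
    (hk : ∀ A ∈ F, A.card = k) (v : α) : Set.InjOn (fun A => A.erase v) (F : Set (Finset α)) := by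
  have key : ∀ A ∈ F, ∀ B ∈ F, v ∈ A → A.erase v = B.erase v → A = B := by
    intro A hA B hB hvA h
    by_cases hvB : v ∈ B
    · rw [← insert_erase hvA, ← insert_erase hvB, h]
    · rw [erase_eq_of_notMem hvB] at h
      have := card_erase_lt_of_mem hvA
      rw [h, hk A hA, hk B hB] at this
      exact absurd this (lt_irrefl k)
  intro A hA B hB h
  by_cases hvA : v ∈ A
  · exact key A hA B hB hvA h
  by_cases hvB : v ∈ B
  · exact (key B hB A hA hvB h.symm).symm
  · simpa [erase_eq_of_notMem hvA, erase_eq_of_notMem hvB] using h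

theorem exists_intersecting_image_erase {F : Finset (Finset α)} (h3 : ∀ A ∈ F, A.card = 3)
    {v : α} (hv : ∃ D ∈ F, v ∈ D) (hvF : ∀ A ∈ F, ∀ B ∈ F, ((A ∩ B).erase v).Nonempty) :
    ∃ F' ⊆ F.biUnion powerset, (∀ A ∈ F', ∀ B ∈ F', (A ∩ B).Nonempty) ∧
      F.card ≤ F'.card ∧ ∃ B ∈ F', B.card ≤ 2 := by
  refine ⟨F.image (·.erase v), ?_, ?_, ?_, ?_⟩
  · intro D hD
    obtain ⟨A, hA, rfl⟩ := mem_image.1 hD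
    exact mem_biUnion.2 ⟨A, hA, mem_powerset.2 (erase_subset v A)⟩
  · simp only [mem_image]
    rintro _ ⟨A, hA, rfl⟩ _ ⟨B, hB, rfl⟩
    rw [erase_inter, inter_erase, erase_idem]
    exact hvF A hA B hB
  · exact (card_image_of_injOn (injOn_erase_of_forall_card_eq h3 v)).ge
  · obtain ⟨D, hD, hvD⟩ := hv
    exact ⟨D.erase v, mem_image_of_mem _ hD, by rw [card_erase_of_mem hvD, h3 D hD]⟩

lemma card_insert_image_pair {z : α} {N : Finset α} (hzN : z ∉ N) :
    (insert {z} (N.image fun n => ({z, n} : Finset α))).card = N.card + 1 := by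
  have hpair : ∀ n ∈ N, n ≠ z := fun n hn h => hzN (h ▸ hn)
  rw [card_insert_of_notMem, card_image_of_injOn]
  · intro n hn m hm h
    simp only at h
    have : n ∈ ({z, m} : Finset α) := h ▸ mem_insert_of_mem (mem_singleton_self n)
    simpa [hpair n hn] using this
  · simp only [mem_image, not_exists, not_and]
    intro n hn h
    have : n ∈ ({z} : Finset α) := h ▸ mem_insert_of_mem (mem_singleton_self n)
    exact hpair n hn (mem_singleton.1 this)

theorem exists_intersecting_star {F : Finset (Finset α)} (hF3 : ∀ A ∈ F, 2 < A.card)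
    {z : α} {N : Finset α} (hzN : z ∉ N) (hz : ∃ D ∈ F, z ∈ D)
    (hN : ∀ n ∈ N, ∃ D ∈ F, z ∈ D ∧ n ∈ D) (hcard : (F.filter (z ∉ ·)).card ≤ N.card + 1) :
    ∃ F' ⊆ F.biUnion powerset, (∀ A ∈ F', ∀ B ∈ F', (A ∩ B).Nonempty) ∧
      F.card ≤ F'.card ∧ ∃ B ∈ F', B.card ≤ 2 := by
  set small := insert {z} (N.image fun n => ({z, n} : Finset α))
  have hsmall : ∀ S ∈ small, S.card ≤ 2 ∧ ∃ D ∈ F, S ⊆ D ∧ z ∈ S := by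
    simp only [small, mem_insert, mem_image]
    rintro S (rfl | ⟨n, hn, rfl⟩)
    · obtain ⟨D, hD, hzD⟩ := hz
      exact ⟨by simp, D, hD, by simpa using hzD, mem_singleton_self z⟩
    · obtain ⟨D, hD, hzD, hnD⟩ := hN n hn
      exact ⟨card_le_two, D, hD, insert_subset hzD (singleton_subset_iff.2 hnD),
        mem_insert_self z _⟩
  refine ⟨(F.biUnion powerset).filter (z ∈ ·), filter_subset _ _, ?_, ?_, ?_⟩
  · intro A hA B hB
    exact ⟨z, mem_inter.2 ⟨(mem_filter.1 hA).2, (mem_filter.1 hB).2⟩⟩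
  · have hdisj : Disjoint small (F.filter (z ∈ ·)) := by
      refine disjoint_left.2 fun S hS hSF => ?_
      have := (hsmall S hS).1
      have := hF3 S (mem_filter.1 hSF).1
      omega
    have hsub : small ∪ F.filter (z ∈ ·) ⊆ (F.biUnion powerset).filter (z ∈ ·) := by
      intro S hS
      rcases mem_union.1 hS with hS | hS
      · obtain ⟨-, D, hD, hSD, hzS⟩ := hsmall S hS
        exact mem_filter.2 ⟨mem_biUnion.2 ⟨D, hD, mem_powerset.2 hSD⟩, hzS⟩
      · obtain ⟨hS, hzS⟩ := mem_filter.1 hS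
        exact mem_filter.2 ⟨mem_biUnion.2 ⟨S, hS, mem_powerset.2 subset_rfl⟩, hzS⟩
    calc F.card = (F.filter (z ∈ ·)).card + (F.filter (z ∉ ·)).card :=
          (card_filter_add_card_filter_not _).symm
      _ ≤ (F.filter (z ∈ ·)).card + small.card := by
          rw [card_insert_image_pair hzN]; omega
      _ = (small ∪ F.filter (z ∈ ·)).card := by rw [card_union_of_disjoint hdisj, add_comm]
      _ ≤ _ := card_le_card hsub
  · obtain ⟨D, hD, hzD⟩ := hz
    refine ⟨{z}, mem_filter.2 ⟨mem_biUnion.2 ⟨D, hD, by simpa using hzD⟩, mem_singleton_self z⟩,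
      by simp⟩

lemma card_filter_mem_mem_inter_nonempty_le {F : Finset (Finset α)}
    (h3 : ∀ A ∈ F, A.card = 3) {x y : α} {W : Finset α} (hxy : x ≠ y) (hxW : x ∉ W)
    (hyW : y ∉ W) : (F.filter fun D => x ∈ D ∧ y ∈ D ∧ (D ∩ W).Nonempty).card ≤ W.card := by
  refine (card_le_card fun D hD => ?_).trans
    (card_image_le (f := fun w => ({x, y, w} : Finset α)))
  obtain ⟨hD, hxD, hyD, w, hw⟩ := mem_filter.1 hD
  obtain ⟨hwD, hwW⟩ := mem_inter.1 hw
  have hxw : x ≠ w := fun h => hxW (h ▸ hwW)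
  have hyw : y ≠ w := fun h => hyW (h ▸ hwW)
  have hcard : ({x, y, w} : Finset α).card = 3 := by
    rw [card_insert_of_notMem (by simp [hxy, hxw]), card_pair hyw]
  refine mem_image.2 ⟨w, hwW, eq_of_subset_of_card_le ?_ (by rw [h3 D hD, hcard])⟩
  simp [insert_subset_iff, hxD, hyD, hwD]

lemma eq_or_eq_or_mem_of_notMem_of_cycle {F : Finset (Finset α)}
    (hF : ∀ A ∈ F, ∀ B ∈ F, (A ∩ B).Nonempty) (h3 : ∀ A ∈ F, A.card = 3) {c v a b a' b' : α}
    (hcv : ∀ D ∈ F, ¬(c ∈ D ∧ v ∈ D)) (hA : {c, a, b} ∈ F) (hA' : {c, a', b'} ∈ F)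
    (hB : {v, a, a'} ∈ F) (hB' : {v, b, b'} ∈ F) {D : Finset α} (hD : D ∈ F) (haD : a ∉ D) :
    D = {c, a', b'} ∨ D = {v, b, b'} ∨ (b ∈ D ∧ a' ∈ D) := by
  have meets : ∀ {x y z : α}, {x, y, z} ∈ F → x ∈ D ∨ y ∈ D ∨ z ∈ D := fun hT => by
    obtain ⟨w, hw⟩ := hF D hD _ hT
    simp only [mem_inter, mem_insert, mem_singleton] at hw
    obtain ⟨hwD, rfl | rfl | rfl⟩ := hw <;> simp [hwD]
  have eq_of_mem : ∀ {x y z : α}, {x, y, z} ∈ F → x ∈ D → y ∈ D → z ∈ D → D = {x, y, z} :=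
    fun hT hx hy hz => (eq_of_subset_of_card_le (by simp [insert_subset_iff, hx, hy, hz])
      (by rw [h3 D hD, h3 _ hT])).symm
  by_cases hc : c ∈ D
  · have hv : v ∉ D := fun hv => hcv D hD ⟨hc, hv⟩
    have ha' : a' ∈ D := by have := meets hB; tauto
    rcases meets hB' with hv' | hb | hb'
    · exact absurd hv' hv
    · exact Or.inr (Or.inr ⟨hb, ha'⟩)
    · exact Or.inl (eq_of_mem hA' hc ha' hb')
  · have hb : b ∈ D := by have := meets hA; tauto
    by_cases ha' : a' ∈ D
    · exact Or.inr (Or.inr ⟨hb, ha'⟩)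
    have hv : v ∈ D := by have := meets hB; tauto
    have hb' : b' ∈ D := by have := meets hA'; tauto
    exact Or.inr (Or.inl (eq_of_mem hB' hv hb hb'))

theorem exists_intersecting_star_of_cycle {F : Finset (Finset α)}
    (hF : ∀ A ∈ F, ∀ B ∈ F, (A ∩ B).Nonempty) (h3 : ∀ A ∈ F, A.card = 3) {c v a b a' b' : α}
    (hcv : ∀ D ∈ F, ¬(c ∈ D ∧ v ∈ D)) (hA : {c, a, b} ∈ F) (hA' : {c, a', b'} ∈ F)
    (hB : {v, a, a'} ∈ F) (hB' : {v, b, b'} ∈ F) (hba' : b ≠ a') {W : Finset α}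
    (hW : W.card ≤ 3) (hbW : b ∉ W) (ha'W : a' ∉ W)
    (hmeet : ∀ D ∈ F, a ∉ D → b ∈ D → a' ∈ D → (D ∩ W).Nonempty) :
    ∃ F' ⊆ F.biUnion powerset, (∀ A ∈ F', ∀ B ∈ F', (A ∩ B).Nonempty) ∧
      F.card ≤ F'.card ∧ ∃ B ∈ F', B.card ≤ 2 := by
  obtain ⟨hca, hcb, hab⟩ := ne_of_card_eq_three (h3 _ hA)
  obtain ⟨hca', -, -⟩ := ne_of_card_eq_three (h3 _ hA')
  obtain ⟨hva, hva', haa'⟩ := ne_of_card_eq_three (h3 _ hB)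
  obtain ⟨hvb, -, -⟩ := ne_of_card_eq_three (h3 _ hB')
  have hcv' : c ≠ v := fun h => hcv _ hA ⟨mem_insert_self _ _, h ▸ mem_insert_self _ _⟩
  have hN : ({c, b, v, a'} : Finset α).card = 4 := by
    rw [card_insert_of_notMem (by simp [hcb, hcv', hca']),
      card_insert_of_notMem (by simp [hvb.symm, hba']), card_pair hva']
  have havoid : F.filter (a ∉ ·) ⊆ {{c, a', b'}, {v, b, b'}} ∪
      F.filter fun D => b ∈ D ∧ a' ∈ D ∧ (D ∩ W).Nonempty := by
    intro D hD
    obtain ⟨hD, haD⟩ := mem_filter.1 hD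
    rcases eq_or_eq_or_mem_of_notMem_of_cycle hF h3 hcv hA hA' hB hB' hD haD
      with rfl | rfl | ⟨hb, ha'⟩
    · simp
    · simp
    · exact mem_union_right _ (mem_filter.2 ⟨hD, hb, ha', hmeet D hD haD hb ha'⟩)
  refine exists_intersecting_star (fun A hA => by simp [h3 A hA]) (z := a) (N := {c, b, v, a'}) ?_ ⟨_, hA, by simp⟩ ?_ ?_
  · simp [hca.symm, hab, hva.symm, haa']
  · simp only [mem_insert, mem_singleton]
    rintro n (rfl | rfl | rfl | rfl)
    exacts [⟨_, hA, by simp, by simp⟩, ⟨_, hA, by simp, by simp⟩, ⟨_, hB, by simp, by simp⟩,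
      ⟨_, hB, by simp, by simp⟩]
  · calc (F.filter (a ∉ ·)).card
        ≤ ({{c, a', b'}, {v, b, b'}} : Finset (Finset α)).card +
          (F.filter fun D => b ∈ D ∧ a' ∈ D ∧ (D ∩ W).Nonempty).card :=
          (card_le_card havoid).trans (card_union_le _ _)
      _ ≤ 2 + W.card := add_le_add card_le_two
          (card_filter_mem_mem_inter_nonempty_le h3 hba' hbW ha'W)
      _ ≤ _ := by omega

theorem exists_intersecting_of_cycle {F : Finset (Finset α)}
    (hF : ∀ A ∈ F, ∀ B ∈ F, (A ∩ B).Nonempty) (h3 : ∀ A ∈ F, A.card = 3) {c v a b a' b' : α}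
    (hcv : ∀ D ∈ F, ¬(c ∈ D ∧ v ∈ D)) (hA : {c, a, b} ∈ F) (hA' : {c, a', b'} ∈ F)
    (hB : {v, a, a'} ∈ F) (hB' : {v, b, b'} ∈ F) (hab' : a ≠ b') (hba' : b ≠ a') :
    ∃ F' ⊆ F.biUnion powerset, (∀ A ∈ F', ∀ B ∈ F', (A ∩ B).Nonempty) ∧
      F.card ≤ F'.card ∧ ∃ B ∈ F', B.card ≤ 2 := by
  by_cases h : ∀ D ∈ F, a ∉ D → b ∈ D → a' ∈ D → (D ∩ {c, v, b'}).Nonempty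
  · obtain ⟨-, hcb, -⟩ := ne_of_card_eq_three (h3 _ hA)
    obtain ⟨hca', -, ha'b'⟩ := ne_of_card_eq_three (h3 _ hA')
    obtain ⟨-, hva', -⟩ := ne_of_card_eq_three (h3 _ hB)
    obtain ⟨hvb, -, hbb'⟩ := ne_of_card_eq_three (h3 _ hB')
    exact exists_intersecting_star_of_cycle hF h3 hcv hA hA' hB hB' hba' card_le_three
      (by simp [hcb.symm, hvb.symm, hbb']) (by simp [hca'.symm, hva'.symm, ha'b']) h
  · push Not at h
    obtain ⟨q, hq, haq, -, -, hqW⟩ := h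
    have hb'q : b' ∉ q := fun h => eq_empty_iff_forall_notMem.1 hqW b' (by simp [h])
    -- the star of `b`, by the symmetry `a ↔ b`, `a' ↔ b'`, `B ↔ B'` of the cycle
    exact exists_intersecting_star_of_cycle hF h3 hcv (by rwa [pair_comm]) (by rwa [pair_comm])
      hB' hB hab' (h3 q hq).le haq hb'q fun D hD _ _ _ => hF D hD q hq

lemma exists_inter_eq_singleton_of_not_forall {F : Finset (Finset α)}
    (hF : ∀ A ∈ F, ∀ B ∈ F, (A ∩ B).Nonempty) {x : α}
    (h : ¬∀ A ∈ F, ∀ B ∈ F, ((A ∩ B).erase x).Nonempty) : ∃ A ∈ F, ∃ B ∈ F, A ∩ B = {x} := by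
  push Not at h
  obtain ⟨A, hA, B, hB, h⟩ := h
  rw [erase_eq_empty_iff] at h
  exact ⟨A, hA, B, hB, h.resolve_left (hF A hA B hB).ne_empty⟩

lemma eq_insert_pair_of_inter_eq_singleton {T X Y : Finset α} {p w x y : α} (hT : T.card = 3)
    (hXY : X ∩ Y = {w}) (hpT : p ∈ T) (hwT : w ∉ T) (hpX : p ∉ X) (hpY : p ∉ Y)
    (hx : x ∈ T ∩ X) (hy : y ∈ T ∩ Y) : T = {p, x, y} := by
  obtain ⟨hxT, hxX⟩ := mem_inter.1 hx
  obtain ⟨hyT, hyY⟩ := mem_inter.1 hy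
  have hpx : p ≠ x := fun h => hpX (h ▸ hxX)
  have hpy : p ≠ y := fun h => hpY (h ▸ hyY)
  have hxy : x ≠ y := by
    rintro rfl
    have : x ∈ X ∩ Y := mem_inter.2 ⟨hxX, hyY⟩
    rw [hXY, mem_singleton] at this
    exact hwT (this ▸ hxT)
  have hcard : ({p, x, y} : Finset α).card = 3 := by
    rw [card_insert_of_notMem (by simp [hpx, hpy]), card_pair hxy]
  exact (eq_of_subset_of_card_le (by simp [insert_subset_iff, hpT, hxT, hyT])
    (by rw [hT, hcard])).symm

lemma exists_cycle {F : Finset (Finset α)} (hF : ∀ A ∈ F, ∀ B ∈ F, (A ∩ B).Nonempty)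
    (h3 : ∀ A ∈ F, A.card = 3) {c v : α} (hcv : ∀ D ∈ F, ¬(c ∈ D ∧ v ∈ D))
    {A A' B B' : Finset α} (hA : A ∈ F) (hA' : A' ∈ F) (hB : B ∈ F) (hB' : B' ∈ F)
    (hAA' : A ∩ A' = {c}) (hBB' : B ∩ B' = {v}) :
    ∃ a b a' b', {c, a, b} ∈ F ∧ {c, a', b'} ∈ F ∧ {v, a, a'} ∈ F ∧ {v, b, b'} ∈ F ∧
      a ≠ b' ∧ b ≠ a' := by
  have hcA := mem_inter.1 (hAA' ▸ mem_singleton_self c)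
  have hvB := mem_inter.1 (hBB' ▸ mem_singleton_self v)
  have hc : ∀ D ∈ F, v ∈ D → c ∉ D := fun D hD hv hc => hcv D hD ⟨hc, hv⟩
  have hv : ∀ D ∈ F, c ∈ D → v ∉ D := fun D hD hc hv => hcv D hD ⟨hc, hv⟩
  obtain ⟨a, ha⟩ := hF A hA B hB
  obtain ⟨b, hb⟩ := hF A hA B' hB'
  obtain ⟨a', ha'⟩ := hF A' hA' B hB
  obtain ⟨b', hb'⟩ := hF A' hA' B' hB'
  have hcore : ∀ {x : α}, x ∈ A → x ∈ A' → x = c := fun hx hx' => by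
    simpa [hAA'] using mem_inter.2 ⟨hx, hx'⟩
  refine ⟨a, b, a', b', ?_, ?_, ?_, ?_, ?_, ?_⟩
  · rwa [← eq_insert_pair_of_inter_eq_singleton (h3 A hA) hBB' hcA.1
      (hv A hA hcA.1) (hc B hB hvB.1) (hc B' hB' hvB.2) ha hb]
  · rwa [← eq_insert_pair_of_inter_eq_singleton (h3 A' hA') hBB' hcA.2
      (hv A' hA' hcA.2) (hc B hB hvB.1) (hc B' hB' hvB.2) ha' hb']
  · rwa [← eq_insert_pair_of_inter_eq_singleton (h3 B hB) hAA' hvB.1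
      (hc B hB hvB.1) (hv A hA hcA.1) (hv A' hA' hcA.2) (inter_comm A B ▸ ha) (inter_comm A' B ▸ ha')]
  · rwa [← eq_insert_pair_of_inter_eq_singleton (h3 B' hB') hAA' hvB.2
      (hc B' hB' hvB.2) (hv A hA hcA.1) (hv A' hA' hcA.2) (inter_comm A B' ▸ hb) (inter_comm A' B' ▸ hb')]
  · rintro rfl
    exact hc B hB hvB.1 (hcore (mem_inter.1 ha).1 (mem_inter.1 hb').1 ▸ (mem_inter.1 ha).2)
  · rintro rfl
    exact hc B' hB' hvB.2 (hcore (mem_inter.1 hb).1 (mem_inter.1 ha').1 ▸ (mem_inter.1 hb).2)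

end

theorem stmt_6_general {α : Type*} [DecidableEq α] (F : Finset (Finset α))
    (hF : ∀ A ∈ F, ∀ B ∈ F, (A ∩ B).Nonempty)
    (h3 : ∀ B ∈ F, B.card = 3) :
    let C : Finset (Finset α) := F.biUnion Finset.powerset
    ∀ c v : α, {c} ∈ C → {v} ∈ C → ({c, v} : Finset α) ∉ C →
    ∃ F' : Finset (Finset α), F' ⊆ C ∧
      (∀ A ∈ F', ∀ B ∈ F', (A ∩ B).Nonempty) ∧
      F.card ≤ F'.card ∧ ∃ B ∈ F', B.card ≤ 2 := by
  intro C c v hc hv hcv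
  have hmem : ∀ {x : α}, {x} ∈ C → ∃ D ∈ F, x ∈ D := by simp [C]
  have hcv' : ∀ D ∈ F, ¬(c ∈ D ∧ v ∈ D) := fun D hD h =>
    hcv (mem_biUnion.2 ⟨D, hD, mem_powerset.2 (insert_subset h.1 (singleton_subset_iff.2 h.2))⟩)
  by_cases hv' : ∀ A ∈ F, ∀ B ∈ F, ((A ∩ B).erase v).Nonempty
  · exact exists_intersecting_image_erase h3 (hmem hv) hv'
  by_cases hc' : ∀ A ∈ F, ∀ B ∈ F, ((A ∩ B).erase c).Nonempty
  · exact exists_intersecting_image_erase h3 (hmem hc) hc'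
  obtain ⟨A, hA, A', hA', hAA'⟩ := exists_inter_eq_singleton_of_not_forall hF hc'
  obtain ⟨B, hB, B', hB', hBB'⟩ := exists_inter_eq_singleton_of_not_forall hF hv'
  obtain ⟨a, b, a', b', hcab, hca'b', hvaa', hvbb', hab', hba'⟩ :=
    exists_cycle hF h3 hcv' hA hA' hB hB' hAA' hBB'
  exact exists_intersecting_of_cycle hF h3 hcv' hcab hca'b' hvaa' hvbb' hab' hba'

/-- If the graph of the downset generated by a nonempty intersecting family of triangles is
not complete, there is an intersecting family in the downset, at least as large, containing
a set of size at most 2. -/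
theorem stmt_6 {α : Type*} [DecidableEq α] (F : Finset (Finset α))
    (hne : F.Nonempty)
    (hF : ∀ A ∈ F, ∀ B ∈ F, (A ∩ B).Nonempty)
    (h3 : ∀ B ∈ F, B.card = 3) :
    let C : Finset (Finset α) := F.biUnion Finset.powerset
    ∀ c v : α, {c} ∈ C → {v} ∈ C → ({c, v} : Finset α) ∉ C →
    ∃ F' : Finset (Finset α), F' ⊆ C ∧
      (∀ A ∈ F', ∀ B ∈ F', (A ∩ B).Nonempty) ∧
      F.card ≤ F'.card ∧ ∃ B ∈ F', B.card ≤ 2 :=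
  stmt_6_general F hF h3
end

section
/- Let F be an intersecting family in a downset C with F ⊆ st_C(a) ∪ st_C(b) but F ⊄ st_C(b). Then there exists a minimal (under inclusion) member B of F with a ∈ B and b ∉ B; moreover, if B ≠ {a}, then for every v ∈ B \ {a} the set R_a(v) = {B' ∈ F : a,v ∈ B', b ∉ B', B' \ {v} ∉ F} is nonempty. -/
/-- If an intersecting family `F` in a downset lies in the union of the stars of `a` and `b`
but not in the star of `b`, then `F` has a minimal member `B` containing `a` but not `b`;
moreover if `B ≠ {a}` then `R_a(v)` is nonempty for each `v ∈ B \ {a}`. -/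
theorem stmt_11 {α : Type*} [DecidableEq α] (C F : Finset (Finset α))
    (hC : ∀ B ∈ C, ∀ A ⊆ B, A ∈ C) (hFC : F ⊆ C)
    (hF : ∀ A ∈ F, ∀ B ∈ F, (A ∩ B).Nonempty)
    (a b : α)
    (hab : ∀ B ∈ F, a ∈ B ∨ b ∈ B)
    (hnb : ∃ B ∈ F, b ∉ B) :
    ∃ B ∈ F, a ∈ B ∧ b ∉ B ∧
      (∀ B' ∈ F, a ∈ B' → b ∉ B' → B' ⊆ B → B' = B) ∧
      (B ≠ {a} → ∀ v ∈ B \ ({a} : Finset α),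
        (F.filter (fun B' => a ∈ B' ∧ v ∈ B' ∧ b ∉ B' ∧ B'.erase v ∉ F)).Nonempty) := by
  classical
  obtain ⟨B0, hB0F, hB0b⟩ := hnb
  have hB0a : a ∈ B0 := (hab B0 hB0F).resolve_right hB0b
  set S := F.filter (fun B => a ∈ B ∧ b ∉ B) with hS
  have hSne : S.Nonempty := ⟨B0, Finset.mem_filter.2 ⟨hB0F, hB0a, hB0b⟩⟩
  obtain ⟨B, hBS, hmin⟩ := S.exists_min_image Finset.card hSne
  obtain ⟨hBF, hBa, hBb⟩ := Finset.mem_filter.1 hBS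
  have hminimal : ∀ B' ∈ F, a ∈ B' → b ∉ B' → B' ⊆ B → B' = B := by
    intro B' hB'F hB'a hB'b hsub
    have hle := hmin B' (Finset.mem_filter.2 ⟨hB'F, hB'a, hB'b⟩)
    exact Finset.eq_of_subset_of_card_le hsub hle
  refine ⟨B, hBF, hBa, hBb, hminimal, ?_⟩
  intro _ v hv
  obtain ⟨hvB, hva⟩ := Finset.mem_sdiff.1 hv
  have hva' : v ≠ a := by simpa using hva
  refine ⟨B, Finset.mem_filter.2 ⟨hBF, hBa, hvB, hBb, ?_⟩⟩
  intro hEF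
  have hEa : a ∈ B.erase v := Finset.mem_erase.2 ⟨hva'.symm, hBa⟩
  have hEb : b ∉ B.erase v := fun h => hBb (Finset.mem_of_mem_erase h)
  have := hminimal _ hEF hEa hEb (Finset.erase_subset _ _)
  exact (this ▸ Finset.notMem_erase v B) hvB
end

section
/- Chvátal's conjecture holds for intersecting families of sets of size at most 2: if F is an intersecting family in which every member has at most 2 elements, and C is the downset generated by F, then there is a vertex a with |F| ≤ |st_C(a)|. -/
/-!
If all members of `F` share a vertex `a`, then `F` itself lies in the star of `a`. Otherwise no
member is a singleton, so all members are edges, and pairwise intersecting edges with no common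
vertex form a triangle `{a, b}, {b, c}, {a, c}`. Then `|F| ≤ 3`, while the star of `a` in the
downset contains `{a}, {a, b}, {a, c}`.
-/

open Finset

namespace Finset

variable {α : Type*} [DecidableEq α]

lemma mem_biUnion_powerset_of_subset {F : Finset (Finset α)} {A B : Finset α}
    (hA : A ∈ F) (hBA : B ⊆ A) : B ∈ F.biUnion powerset :=
  mem_biUnion.2 ⟨A, hA, mem_powerset.2 hBA⟩

lemma mem_filter_biUnion_powerset {F : Finset (Finset α)} {A B : Finset α} {a : α}
    (hA : A ∈ F) (hBA : B ⊆ A) (ha : a ∈ B) :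
    B ∈ (F.biUnion powerset).filter (a ∈ ·) :=
  mem_filter.2 ⟨mem_biUnion_powerset_of_subset hA hBA, ha⟩

lemma mem_or_mem_of_inter_pair_nonempty {E : Finset α} {u v : α}
    (h : (E ∩ {u, v}).Nonempty) : u ∈ E ∨ v ∈ E := by
  obtain ⟨x, hx⟩ := h
  obtain ⟨hxE, hx⟩ := mem_inter.1 hx
  rcases mem_insert.1 hx with rfl | hx
  · exact Or.inl hxE
  · exact Or.inr (mem_singleton.1 hx ▸ hxE)

lemma exists_eq_pair_of_card_eq_two {E : Finset α} {u : α} (hE : E.card = 2) (hu : u ∈ E) :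
    ∃ v, u ≠ v ∧ E = {u, v} := by
  obtain ⟨v, hv⟩ := card_eq_one.1 (by rw [card_erase_of_mem hu, hE] : (E.erase u).card = 1)
  refine ⟨v, fun h => ?_, by rw [← hv, insert_erase hu]⟩
  exact notMem_erase u E (by rw [hv, h]; exact mem_singleton_self v)

lemma eq_pair_of_card_eq_two {E : Finset α} {u v : α} (hE : E.card = 2) (huv : u ≠ v)
    (hu : u ∈ E) (hv : v ∈ E) : E = {u, v} :=
  (eq_of_subset_of_card_le (insert_subset hu (singleton_subset_iff.2 hv))
    (by rw [hE, card_pair huv])).symm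

variable {F : Finset (Finset α)}

lemma card_eq_two_of_intersecting_of_forall_exists_notMem
    (hF : ∀ A ∈ F, ∀ B ∈ F, (A ∩ B).Nonempty) (h2 : ∀ B ∈ F, B.card ≤ 2)
    (hcom : ∀ x, ∃ B ∈ F, x ∉ B) : ∀ B ∈ F, B.card = 2 := by
  intro B hB
  have hpos : 0 < B.card := card_pos.2 (by simpa using hF B hB B hB)
  have hne_one : B.card ≠ 1 := by
    intro h1
    obtain ⟨x, rfl⟩ := card_eq_one.1 h1
    obtain ⟨E, hE, hxE⟩ := hcom x
    obtain ⟨y, hy⟩ := hF E hE _ hB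
    rw [mem_inter, mem_singleton] at hy
    exact hxE (hy.2 ▸ hy.1)
  have := h2 B hB
  omega

lemma exists_triangle_of_intersecting
    (hF : ∀ A ∈ F, ∀ B ∈ F, (A ∩ B).Nonempty) (h2 : ∀ B ∈ F, B.card = 2)
    (hcom : ∀ x, ∃ B ∈ F, x ∉ B) (hne : F.Nonempty) :
    ∃ a b c : α, a ≠ b ∧ a ≠ c ∧ b ≠ c ∧ ({a, b} : Finset α) ∈ F ∧
      ({a, c} : Finset α) ∈ F ∧ F ⊆ {{a, b}, {b, c}, {a, c}} := by
  obtain ⟨A, hA⟩ := hne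
  obtain ⟨a, b, hab, rfl⟩ := card_eq_two.1 (h2 A hA)
  obtain ⟨B, hB, haB⟩ := hcom a
  have hbB : b ∈ B := (mem_or_mem_of_inter_pair_nonempty (hF B hB _ hA)).resolve_left haB
  obtain ⟨c, hbc, rfl⟩ := exists_eq_pair_of_card_eq_two (h2 B hB) hbB
  have hac : a ≠ c := fun h => haB (by simp [h])
  obtain ⟨D, hD, hbD⟩ := hcom b
  have haD : a ∈ D := (mem_or_mem_of_inter_pair_nonempty (hF D hD _ hA)).resolve_right hbD
  have hcD : c ∈ D := (mem_or_mem_of_inter_pair_nonempty (hF D hD _ hB)).resolve_left hbD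
  rw [eq_pair_of_card_eq_two (h2 D hD) hac haD hcD] at hD
  refine ⟨a, b, c, hab, hac, hbc, hA, hD, fun E hE => ?_⟩
  have hEA := mem_or_mem_of_inter_pair_nonempty (hF E hE _ hA)
  have hEB := mem_or_mem_of_inter_pair_nonempty (hF E hE _ hB)
  have hED := mem_or_mem_of_inter_pair_nonempty (hF E hE _ hD)
  simp only [mem_insert, mem_singleton]
  by_cases haE : a ∈ E
  · by_cases hbE : b ∈ E
    · exact Or.inl (eq_pair_of_card_eq_two (h2 E hE) hab haE hbE)
    · exact Or.inr (Or.inr (eq_pair_of_card_eq_two (h2 E hE) hac haE (hEB.resolve_left hbE)))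
  · exact Or.inr (Or.inl
      (eq_pair_of_card_eq_two (h2 E hE) hbc (hEA.resolve_left haE) (hED.resolve_left haE)))

lemma three_le_card_filter_biUnion_powerset {a b c : α} (hab : a ≠ b) (hac : a ≠ c)
    (hbc : b ≠ c) (hA : {a, b} ∈ F) (hD : {a, c} ∈ F) :
    3 ≤ ((F.biUnion powerset).filter (a ∈ ·)).card := by
  have hstar :
      ({{a}, {a, b}, {a, c}} : Finset (Finset α)) ⊆ (F.biUnion powerset).filter (a ∈ ·) := by
    simp only [insert_subset_iff, singleton_subset_iff]
    exact ⟨mem_filter_biUnion_powerset hA (by simp) (by simp),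
      mem_filter_biUnion_powerset hA subset_rfl (by simp),
      mem_filter_biUnion_powerset hD subset_rfl (by simp)⟩
  have hcard : ({{a}, {a, b}, {a, c}} : Finset (Finset α)).card = 3 := by
    refine card_eq_three.2 ⟨{a}, {a, b}, {a, c}, ?_, ?_, ?_, rfl⟩
    · exact fun h => by simpa [card_pair hab] using congrArg card h
    · exact fun h => by simpa [card_pair hac] using congrArg card h
    · intro h
      have hb : b ∈ ({a, c} : Finset α) := h ▸ mem_insert_of_mem (mem_singleton_self b)
      simp [hab.symm, hbc] at hb
  exact hcard ▸ card_le_card hstar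

end Finset

/-- Chvátal's conjecture for intersecting families of sets of size at most 2.
(`F` is assumed nonempty so that the generated downset has a vertex.) -/
theorem stmt_12 {α : Type*} [DecidableEq α] (F : Finset (Finset α))
    (hne : F.Nonempty)
    (hF : ∀ A ∈ F, ∀ B ∈ F, (A ∩ B).Nonempty)
    (h2 : ∀ B ∈ F, B.card ≤ 2) :
    let C : Finset (Finset α) := F.biUnion Finset.powerset
    ∃ a : α, {a} ∈ C ∧ F.card ≤ (C.filter (fun B => a ∈ B)).card := by
  intro C
  by_cases hcom : ∃ a, ∀ B ∈ F, a ∈ B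
  · obtain ⟨a, ha⟩ := hcom
    obtain ⟨A, hA⟩ := hne
    refine ⟨a, mem_biUnion_powerset_of_subset hA (singleton_subset_iff.2 (ha A hA)),
      card_le_card fun B hB => mem_filter_biUnion_powerset hB subset_rfl (ha B hB)⟩
  push Not at hcom
  have hedges := card_eq_two_of_intersecting_of_forall_exists_notMem hF h2 hcom
  obtain ⟨a, b, c, hab, hac, hbc, hA, hD, hsub⟩ :=
    exists_triangle_of_intersecting hF hedges hcom hne
  refine ⟨a, mem_biUnion_powerset_of_subset hA (by simp), ?_⟩
  calc F.card ≤ 3 := (card_le_card hsub).trans card_le_three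
    _ ≤ _ := three_le_card_filter_biUnion_powerset hab hac hbc hA hD
end

section
/- Let F be an intersecting family of 3-element sets, C the downset generated by F, and suppose {a,b,c}, {a,b,x} ∈ F and there are at least three triangles in F dangling from {a,b,c} at c (triangles τ with τ ∩ {a,b,c} = {c}). Then every member of F intersects {c,x}, and hence F ∪ {{c,x}} is an intersecting family contained in st_C(c) ∪ st_C(x). -/
/-- If `{a,b,c}, {a,b,x} ∈ F` and at least three triangles of `F` dangle from `{a,b,c}` at
`c`, then every member of `F` meets `{c,x}`, and `F ∪ {{c,x}}` is an intersecting family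
contained in `st_C(c) ∪ st_C(x)`, where `C` is the downset generated by `F`. -/
theorem stmt_13 {α : Type*} [DecidableEq α] (F : Finset (Finset α))
    (hF : ∀ A ∈ F, ∀ B ∈ F, (A ∩ B).Nonempty)
    (h3 : ∀ B ∈ F, B.card = 3)
    (a b c x : α) (hab : a ≠ b) (hac : a ≠ c) (hbc : b ≠ c)
    (hax : a ≠ x) (hbx : b ≠ x) (hcx : c ≠ x)
    (h1 : ({a, b, c} : Finset α) ∈ F) (h2 : ({a, b, x} : Finset α) ∈ F)
    (hd : 3 ≤ (F.filter (fun τ => τ ∩ ({a, b, c} : Finset α) = {c})).card) :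
    let C : Finset (Finset α) := F.biUnion Finset.powerset
    (∀ B ∈ F, (B ∩ ({c, x} : Finset α)).Nonempty) ∧
    (∀ A ∈ insert ({c, x} : Finset α) F, ∀ B ∈ insert ({c, x} : Finset α) F,
      (A ∩ B).Nonempty) ∧
    (∀ B ∈ insert ({c, x} : Finset α) F, B ∈ C ∧ (c ∈ B ∨ x ∈ B)) := by
  intro C
  -- every dangling triangle contains c and x and misses a, b
  have hdang : ∀ τ ∈ F, τ ∩ ({a,b,c} : Finset α) = {c} →
      c ∈ τ ∧ x ∈ τ ∧ a ∉ τ ∧ b ∉ τ := by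
    intro τ hτ heq
    have hc : c ∈ τ := by
      have : c ∈ τ ∩ ({a,b,c} : Finset α) := by rw [heq]; simp
      exact (Finset.mem_inter.1 this).1
    have ha : a ∉ τ := by
      intro h
      have : a ∈ τ ∩ ({a,b,c} : Finset α) := by simp [h]
      rw [heq] at this; simp at this; exact hac this
    have hb : b ∉ τ := by
      intro h
      have : b ∈ τ ∩ ({a,b,c} : Finset α) := by simp [h]
      rw [heq] at this; simp at this; exact hbc this
    have hx : x ∈ τ := by
      obtain ⟨y, hy⟩ := hF τ hτ _ h2
      simp only [Finset.mem_inter, Finset.mem_insert, Finset.mem_singleton] at hy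
      rcases hy with ⟨h1', rfl | rfl | rfl⟩
      · exact absurd h1' ha
      · exact absurd h1' hb
      · exact h1'
    exact ⟨hc, hx, ha, hb⟩
  -- extract three distinct dangling triangles
  obtain ⟨S, hSsub, hScard⟩ := Finset.exists_subset_card_eq hd
  obtain ⟨τ1, τ2, τ3, h12, h13, h23, rfl⟩ := Finset.card_eq_three.1 hScard
  have mt : ∀ τ ∈ ({τ1, τ2, τ3} : Finset (Finset α)), τ ∈ F ∧
      τ ∩ ({a,b,c} : Finset α) = {c} := by
    intro τ hτ
    have := hSsub hτ
    simpa using Finset.mem_filter.1 this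
  have m1 := mt τ1 (by simp)
  have m2 := mt τ2 (by simp)
  have m3 := mt τ3 (by simp)
  have d1 := hdang τ1 m1.1 m1.2
  have d2 := hdang τ2 m2.1 m2.2
  have d3 := hdang τ3 m3.1 m3.2
  -- key claim
  have key : ∀ B ∈ F, (B ∩ ({c, x} : Finset α)).Nonempty := by
    intro B hB
    by_contra hemp
    have hcB : c ∉ B := fun h => hemp ⟨c, by simp [h]⟩
    have hxB : x ∉ B := fun h => hemp ⟨x, by simp [h]⟩
    -- a or b is in B
    have hyB : a ∈ B ∨ b ∈ B := by
      obtain ⟨y, hy⟩ := hF B hB _ h1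
      simp only [Finset.mem_inter, Finset.mem_insert, Finset.mem_singleton] at hy
      rcases hy with ⟨h1', rfl | rfl | rfl⟩
      · exact Or.inl h1'
      · exact Or.inr h1'
      · exact absurd h1' hcB
    -- each dangling triangle of the three contributes a fresh element of B
    have hw : ∀ τ, τ ∈ F → c ∈ τ → x ∈ τ → a ∉ τ → b ∉ τ →
        ∃ w ∈ B, w ∈ τ ∧ w ≠ c ∧ w ≠ x ∧ w ≠ a ∧ w ≠ b ∧
          τ = ({c, x, w} : Finset α) := by
      intro τ hτ hc hx ha hb
      obtain ⟨w, hwmem⟩ := hF B hB τ hτ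
      rw [Finset.mem_inter] at hwmem
      obtain ⟨hwB, hwτ⟩ := hwmem
      have hwc : w ≠ c := fun h => hcB (h ▸ hwB)
      have hwx : w ≠ x := fun h => hxB (h ▸ hwB)
      have hwa : w ≠ a := fun h => ha (h ▸ hwτ)
      have hwb : w ≠ b := fun h => hb (h ▸ hwτ)
      refine ⟨w, hwB, hwτ, hwc, hwx, hwa, hwb, ?_⟩
      have hsub : ({c, x, w} : Finset α) ⊆ τ := by
        intro z hz
        simp only [Finset.mem_insert, Finset.mem_singleton] at hz
        rcases hz with rfl | rfl | rfl <;> assumption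
      have hcard : ({c, x, w} : Finset α).card = 3 := by
        rw [Finset.card_insert_of_notMem (by simp [hcx, hwc.symm]),
          Finset.card_insert_of_notMem (by simp [hwx.symm])]
        simp
      exact (Finset.eq_of_subset_of_card_le hsub (by rw [hcard, h3 τ hτ])).symm
    obtain ⟨w1, hw1B, _, hw1c, hw1x, hw1a, hw1b, he1⟩ :=
      hw τ1 m1.1 d1.1 d1.2.1 d1.2.2.1 d1.2.2.2
    obtain ⟨w2, hw2B, _, hw2c, hw2x, hw2a, hw2b, he2⟩ :=
      hw τ2 m2.1 d2.1 d2.2.1 d2.2.2.1 d2.2.2.2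
    obtain ⟨w3, hw3B, _, hw3c, hw3x, hw3a, hw3b, he3⟩ :=
      hw τ3 m3.1 d3.1 d3.2.1 d3.2.2.1 d3.2.2.2
    have hww12 : w1 ≠ w2 := fun h => h12 (by rw [he1, he2, h])
    have hww13 : w1 ≠ w3 := fun h => h13 (by rw [he1, he3, h])
    have hww23 : w2 ≠ w3 := fun h => h23 (by rw [he2, he3, h])
    -- B contains 4 distinct elements, contradiction with card 3
    rcases hyB with hy | hy
    · have hsub : ({a, w1, w2, w3} : Finset α) ⊆ B := by
        intro z hz
        simp only [Finset.mem_insert, Finset.mem_singleton] at hz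
        rcases hz with rfl | rfl | rfl | rfl <;> assumption
      have : ({a, w1, w2, w3} : Finset α).card = 4 := by
        rw [Finset.card_insert_of_notMem (by simp [hw1a.symm, hw2a.symm, hw3a.symm]),
          Finset.card_insert_of_notMem (by simp [hww12, hww13]),
          Finset.card_insert_of_notMem (by simp [hww23])]
        simp
      have hle := Finset.card_le_card hsub
      rw [this, h3 B hB] at hle
      omega
    · have hsub : ({b, w1, w2, w3} : Finset α) ⊆ B := by
        intro z hz
        simp only [Finset.mem_insert, Finset.mem_singleton] at hz
        rcases hz with rfl | rfl | rfl | rfl <;> assumption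
      have : ({b, w1, w2, w3} : Finset α).card = 4 := by
        rw [Finset.card_insert_of_notMem (by simp [hw1b.symm, hw2b.symm, hw3b.symm]),
          Finset.card_insert_of_notMem (by simp [hww12, hww13]),
          Finset.card_insert_of_notMem (by simp [hww23])]
        simp
      have hle := Finset.card_le_card hsub
      rw [this, h3 B hB] at hle
      omega
  refine ⟨key, ?_, ?_⟩
  · intro A hA B hB
    rcases Finset.mem_insert.1 hA with rfl | hA
    · rcases Finset.mem_insert.1 hB with rfl | hB
      · exact ⟨c, by simp⟩
      · obtain ⟨y, hy⟩ := key B hB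
        rw [Finset.mem_inter] at hy
        exact ⟨y, Finset.mem_inter.2 ⟨hy.2, hy.1⟩⟩
    · rcases Finset.mem_insert.1 hB with rfl | hB
      · exact key A hA
      · exact hF A hA B hB
  · intro B hB
    rcases Finset.mem_insert.1 hB with rfl | hB
    · constructor
      · refine Finset.mem_biUnion.2 ⟨τ1, m1.1, Finset.mem_powerset.2 ?_⟩
        intro z hz
        simp only [Finset.mem_insert, Finset.mem_singleton] at hz
        rcases hz with rfl | rfl
        · exact d1.1
        · exact d1.2.1
      · exact Or.inl (by simp)
    · constructor
      · exact Finset.mem_biUnion.2 ⟨B, hB, Finset.mem_powerset.2 (le_refl _)⟩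
      · obtain ⟨y, hy⟩ := key B hB
        rw [Finset.mem_inter] at hy
        rcases Finset.mem_insert.1 hy.2 with rfl | h
        · exact Or.inl hy.1
        · rw [Finset.mem_singleton] at h
          exact Or.inr (h ▸ hy.1)
end

section
/- Let F be an intersecting family of 3-element subsets of a finite set V such that: no member of F has at most one dangling triangle at any of its vertices, some two members share an edge, and the downset generated by F has a complete graph on its vertex set. If {a,b,c},{a,b,x} ∈ F and exactly two triangles {c,x,y},{c,x,z} of F dangle from {a,b,c} at c, then V has no vertices other than a,b,c,x,y,z. -/
/-- Suppose `F` is an intersecting family of triangles in which every triangle has at least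
two dangling triangles at each of its vertices, some two members share an edge, and the
graph of the downset generated by `F` is complete on the vertex set. If `{a,b,c},{a,b,x} ∈ F`
and exactly the two triangles `{c,x,y}`, `{c,x,z}` dangle from `{a,b,c}` at `c`, then the
only vertices are `a,b,c,x,y,z`. -/
theorem stmt_16 {α : Type*} [DecidableEq α] (V : Finset α) (F : Finset (Finset α))
    (hsub : ∀ B ∈ F, B ⊆ V)
    (h3 : ∀ B ∈ F, B.card = 3)
    (hF : ∀ A ∈ F, ∀ B ∈ F, (A ∩ B).Nonempty)
    (hdangle : ∀ T ∈ F, ∀ p ∈ T,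
      2 ≤ (F.filter (fun τ => τ ∩ T = {p})).card)
    (hshare : ∃ A ∈ F, ∃ B ∈ F, (A ∩ B).card = 2)
    (hcomplete : ∀ u v : α, (∃ B ∈ F, u ∈ B) → (∃ B ∈ F, v ∈ B) → u ≠ v →
      ∃ B ∈ F, ({u, v} : Finset α) ⊆ B)
    (a b c x y z : α)
    (hdist : ({a, b, c, x, y, z} : Finset α).card = 6)
    (h1 : ({a, b, c} : Finset α) ∈ F) (h2 : ({a, b, x} : Finset α) ∈ F)
    (htwo : F.filter (fun τ => τ ∩ ({a, b, c} : Finset α) = {c})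
      = {({c, x, y} : Finset α), ({c, x, z} : Finset α)}) :
    ∀ u : α, (∃ B ∈ F, u ∈ B) → u ∈ ({a, b, c, x, y, z} : Finset α) := by
  -- pairwise distinctness of a,b,c,x,y,z
  have hnodup : ([a, b, c, x, y, z] : List α).Nodup := by
    have hcard : ((↑([a, b, c, x, y, z] : List α) : Multiset α)).toFinset.card
        = Multiset.card (↑([a, b, c, x, y, z] : List α) : Multiset α) := by
      simpa using hdist
    simpa using Multiset.toFinset_card_eq_card_iff_nodup.mp hcard
  simp only [List.nodup_cons, List.mem_cons, List.mem_singleton, List.not_mem_nil,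
    or_false, not_or, List.nodup_nil, and_true] at hnodup
  obtain ⟨⟨hab, hac, hax, hay, haz⟩, ⟨hbc, hbx, hby, hbz⟩, ⟨hcx, hcy, hcz⟩,
    ⟨hxy, hxz⟩, hyz, -⟩ := hnodup
  -- members {c,x,y} and {c,x,z} are in F
  have hcxyF : ({c, x, y} : Finset α) ∈ F := by
    have : ({c, x, y} : Finset α) ∈ F.filter (fun τ => τ ∩ ({a, b, c} : Finset α) = {c}) := by
      rw [htwo]; simp
    exact (Finset.mem_filter.mp this).1
  have hcxzF : ({c, x, z} : Finset α) ∈ F := by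
    have : ({c, x, z} : Finset α) ∈ F.filter (fun τ => τ ∩ ({a, b, c} : Finset α) = {c}) := by
      rw [htwo]; simp
    exact (Finset.mem_filter.mp this).1
  intro u hu
  by_contra hu6
  simp only [Finset.mem_insert, Finset.mem_singleton, not_or] at hu6
  obtain ⟨hua, hub, huc, hux, huy, huz⟩ := hu6
  -- get B containing u and c
  obtain ⟨B, hBF, hBsub⟩ := hcomplete u c hu ⟨_, h1, by simp⟩ huc
  have huB : u ∈ B := hBsub (by simp)
  have hcB : c ∈ B := hBsub (by simp)
  -- case on B ∩ {a,b,c}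
  -- helper: if some w' ≠ x,y,z with u ≠ w' lies in every triangle dangling from B at u,
  -- and c avoids each such triangle, we get a contradiction with hdangle
  have main : ∀ w' : α, w' ≠ x → w' ≠ y → w' ≠ z → u ≠ w' →
      (∀ τ ∈ F, τ ∩ B = {u} → w' ∈ τ ∧ c ∉ τ) → False := by
    intro w' hw'x hw'y hw'z huw' hforce
    have hkey : ∀ τ ∈ F, τ ∩ B = {u} → τ = {u, w', x} := by
      intro τ hτF hτB
      have hcard : τ.card = 3 := h3 τ hτF
      have huτ : u ∈ τ := by
        have : u ∈ τ ∩ B := by rw [hτB]; simp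
        exact (Finset.mem_inter.mp this).1
      obtain ⟨hw'τ, hcτ⟩ := hforce τ hτF hτB
      have hxτ : x ∈ τ := by
        by_contra hxτ
        have hyτ : y ∈ τ := by
          obtain ⟨v, hv⟩ := hF τ hτF _ hcxyF
          rw [Finset.mem_inter] at hv
          obtain ⟨hv1, hv2⟩ := hv
          simp only [Finset.mem_insert, Finset.mem_singleton] at hv2
          rcases hv2 with rfl | rfl | rfl
          · exact absurd hv1 hcτ
          · exact absurd hv1 hxτ
          · exact hv1
        have hzτ : z ∈ τ := by
          obtain ⟨v, hv⟩ := hF τ hτF _ hcxzF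
          rw [Finset.mem_inter] at hv
          obtain ⟨hv1, hv2⟩ := hv
          simp only [Finset.mem_insert, Finset.mem_singleton] at hv2
          rcases hv2 with rfl | rfl | rfl
          · exact absurd hv1 hcτ
          · exact absurd hv1 hxτ
          · exact hv1
        have hsub4 : ({u, w', y, z} : Finset α) ⊆ τ := by
          intro v hv
          simp only [Finset.mem_insert, Finset.mem_singleton] at hv
          rcases hv with rfl | rfl | rfl | rfl <;> assumption
        have h4 : ({u, w', y, z} : Finset α).card = 4 := by
          rw [Finset.card_insert_of_notMem (by simp [huw', huy, huz]),
            Finset.card_insert_of_notMem (by simp [hw'y, hw'z]),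
            Finset.card_insert_of_notMem (by simp [hyz]), Finset.card_singleton]
        have := Finset.card_le_card hsub4
        omega
      have hsub3 : ({u, w', x} : Finset α) ⊆ τ := by
        intro v hv
        simp only [Finset.mem_insert, Finset.mem_singleton] at hv
        rcases hv with rfl | rfl | rfl <;> assumption
      have hc3 : ({u, w', x} : Finset α).card = 3 := by
        rw [Finset.card_insert_of_notMem (by simp [huw', hux]),
          Finset.card_insert_of_notMem (by simp [hw'x]), Finset.card_singleton]
      exact (Finset.eq_of_subset_of_card_le hsub3 (by omega)).symm
    have hle : (F.filter (fun τ => τ ∩ B = {u})).card ≤ 1 := by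
      have : F.filter (fun τ => τ ∩ B = {u}) ⊆ {({u, w', x} : Finset α)} := by
        intro τ hτ
        rw [Finset.mem_filter] at hτ
        simp [hkey τ hτ.1 hτ.2]
      simpa using Finset.card_le_card this
    have := hdangle B hBF u huB
    omega
  by_cases habB : a ∈ B ∨ b ∈ B
  · have hnotmem : ∀ τ, τ ∩ B = {u} → ∀ v ∈ B, v ≠ u → v ∉ τ := by
      intro τ hτB v hvB hvu hvτ
      have : v ∈ τ ∩ B := Finset.mem_inter.mpr ⟨hvτ, hvB⟩
      rw [hτB] at this
      exact hvu (Finset.mem_singleton.mp this)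
    obtain hw | hw := habB
    · refine main b hbx hby hbz hub ?_
      intro τ hτF hτB
      have hcτ : c ∉ τ := hnotmem τ hτB c hcB (fun h => huc h.symm)
      have haτ : a ∉ τ := hnotmem τ hτB a hw (fun h => hua h.symm)
      refine ⟨?_, hcτ⟩
      obtain ⟨v, hv⟩ := hF τ hτF _ h1
      rw [Finset.mem_inter] at hv
      obtain ⟨hv1, hv2⟩ := hv
      simp only [Finset.mem_insert, Finset.mem_singleton] at hv2
      rcases hv2 with rfl | rfl | rfl
      · exact absurd hv1 haτ
      · exact hv1
      · exact absurd hv1 hcτ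
    · refine main a hax hay haz hua ?_
      intro τ hτF hτB
      have hcτ : c ∉ τ := hnotmem τ hτB c hcB (fun h => huc h.symm)
      have hbτ : b ∉ τ := hnotmem τ hτB b hw (fun h => hub h.symm)
      refine ⟨?_, hcτ⟩
      obtain ⟨v, hv⟩ := hF τ hτF _ h1
      rw [Finset.mem_inter] at hv
      obtain ⟨hv1, hv2⟩ := hv
      simp only [Finset.mem_insert, Finset.mem_singleton] at hv2
      rcases hv2 with rfl | rfl | rfl
      · exact hv1
      · exact absurd hv1 hbτ
      · exact absurd hv1 hcτ
  · -- B ∩ {a,b,c} = {c}, so B ∈ {{c,x,y},{c,x,z}}, contradiction with u ∈ B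
    push_neg at habB
    have hBabc : B ∩ ({a, b, c} : Finset α) = {c} := by
      ext v
      simp only [Finset.mem_inter, Finset.mem_insert, Finset.mem_singleton]
      constructor
      · rintro ⟨hv1, rfl | rfl | rfl⟩
        · exact absurd hv1 habB.1
        · exact absurd hv1 habB.2
        · rfl
      · rintro rfl; exact ⟨hcB, Or.inr (Or.inr rfl)⟩
    have : B ∈ F.filter (fun τ => τ ∩ ({a, b, c} : Finset α) = {c}) :=
      Finset.mem_filter.mpr ⟨hBF, hBabc⟩
    rw [htwo] at this
    simp only [Finset.mem_insert, Finset.mem_singleton] at this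
    rcases this with rfl | rfl <;>
      · simp only [Finset.mem_insert, Finset.mem_singleton] at huB
        tauto
end
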